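/- arXiv:2303.03238 — 4 statements merged into one kernel-verified Lean document; each statement's English description precedes it below -/
import Mathlib

section
/- Let k ≥ 1, let T be a binary phylogenetic X-tree with |X| = n ≥ 4, let [x,y] be a cherry of T, and let T^2 be the tree obtained from T by the cherry reduction of type 2 applied to [x,y]. If f ∈ A_k(T) satisfies f(x) ≠ f(y) and f^2 is the restriction of f to X∖{x,y}, then f^2 ∈ A_{k−1}(T^2). -/
open SimpleGraph

/-- A binary phylogenetic `X`-tree: a finite tree whose leaves (vertices of degree
at most 1) are bijectively labeled by the taxa in `X` and all of whose internal
vertices have degree 3. -/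
structure PhyloTree (X : Type*) where
  V : Type*
  fintypeV : Fintype V
  G : SimpleGraph V
  isTree : G.IsTree
  leaf : X → V
  leaf_inj : Function.Injective leaf
  leaf_iff : ∀ v : V, (G.neighborSet v).ncard ≤ 1 ↔ ∃ x, leaf x = v
  binary : ∀ v : V, (G.neighborSet v).ncard = 1 ∨ (G.neighborSet v).ncard = 3

namespace PhyloTree

variable {X : Type*}

/-- The number of changing edges of an extension `g : V → Bool` on `T`. -/
noncomputable def changingNumber (T : PhyloTree X) (g : T.V → Bool) : ℕ :=
  {e ∈ T.G.edgeSet | ¬ (Sym2.map g e).IsDiag}.ncard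

/-- The parsimony score `l(f,T)` of a binary character `f : X → Bool` on `T`:
the minimal number of changing edges over all extensions of `f` on `T`. -/
noncomputable def parsimony (T : PhyloTree X) (f : X → Bool) : ℕ :=
  sInf {n : ℕ | ∃ g : T.V → Bool, (∀ x : X, g (T.leaf x) = f x) ∧ T.changingNumber g = n}

/-- `A_k(T)`: the set of binary characters with parsimony score `k` on `T`. -/
def Ak (T : PhyloTree X) (k : ℕ) : Set (X → Bool) :=
  {f | T.parsimony f = k}

/-- Leaf-label-preserving isomorphism of phylogenetic `X`-trees. -/
def Isomorphic (T T' : PhyloTree X) : Prop :=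
  ∃ φ : T.G ≃g T'.G, ∀ x : X, φ (T.leaf x) = T'.leaf x

/-- The set of leaf vertices of `T`. -/
def leafSet (T : PhyloTree X) : Set T.V := Set.range T.leaf

/-- The set of taxa lying on the `u`-side of the edge `{u,v}` of `T`. -/
def side (T : PhyloTree X) (u v : T.V) : Set X :=
  {x | (T.G.deleteEdges {s(u, v)}).Reachable (T.leaf x) u}

/-- The split sides of `T`: all taxon sets cut off by some edge of `T`. -/
def splits (T : PhyloTree X) : Set (Set X) :=
  {S | ∃ u v : T.V, T.G.Adj u v ∧ S = T.side u v}

/-- `[x,y]` is a cherry of `T`: two distinct leaves adjacent to the same vertex. -/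
def IsCherry (T : PhyloTree X) (x y : X) : Prop :=
  x ≠ y ∧ ∃ u : T.V, T.G.Adj (T.leaf x) u ∧ T.G.Adj (T.leaf y) u

end PhyloTree

/-- `T'` is the result of a type-1 cherry reduction of the cherry `[x,y]` of `T`
(delete leaf `x`, suppress the resulting degree-2 vertex), characterized via the
split systems (by Buneman's theorem this determines `T'` uniquely). -/
def IsRed1 {X : Type*} (T : PhyloTree X) (x y : X)
    (T' : PhyloTree {z : X // z ≠ x}) : Prop :=
  T.IsCherry x y ∧
  (fun S : Set {z : X // z ≠ x} => Subtype.val '' S) '' T'.splits =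
    {S : Set X | ∃ S' ∈ T.splits, S = S' \ {x}} \ {∅, ({x} : Set X)ᶜ}

/-- `T'` is the result of a type-2 cherry reduction of the cherry `[x,y]` of `T`
(delete leaves `x` and `y` and their common neighbor, suppress the resulting
degree-2 vertex), characterized via the split systems. -/
def IsRed2 {X : Type*} (T : PhyloTree X) (x y : X)
    (T' : PhyloTree {z : X // z ≠ x ∧ z ≠ y}) : Prop :=
  T.IsCherry x y ∧
  (fun S : Set {z : X // z ≠ x ∧ z ≠ y} => Subtype.val '' S) '' T'.splits =
    {S : Set X | ∃ S' ∈ T.splits, S = S' \ {x, y}} \ {∅, ({x, y} : Set X)ᶜ}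

/-- `T'` is an NNI neighbor of `T`: there is an inner edge `{u,v}` of `T`, with
the four subtrees hanging off `u` (via `a₁`, `a₂`) and `v` (via `b₁`, `b₂`),
such that `T'` arises by exchanging the subtree at `a₂` with the one at `b₂`;
characterized via split systems. -/
def IsNNINeighbor {X : Type*} (T T' : PhyloTree X) : Prop :=
  ∃ u v a₁ a₂ b₁ b₂ : T.V,
    T.G.Adj u v ∧ T.G.Adj u a₁ ∧ T.G.Adj u a₂ ∧ T.G.Adj v b₁ ∧ T.G.Adj v b₂ ∧
    a₁ ≠ a₂ ∧ a₁ ≠ v ∧ a₂ ≠ v ∧ b₁ ≠ b₂ ∧ b₁ ≠ u ∧ b₂ ≠ u ∧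
    T'.splits = (T.splits \ {T.side u v, T.side v u}) ∪
      {T.side a₁ u ∪ T.side b₂ v, T.side a₂ u ∪ T.side b₁ v}

/-- An `A`-`B`-path in a graph `G`: a path from a vertex of `A` to a vertex of `B`
none of whose interior vertices lies in `A` or `B`. -/
structure ABPath {V : Type*} (G : SimpleGraph V) (A B : Set V) where
  first : V
  last : V
  walk : G.Walk first last
  isPath : walk.IsPath
  first_mem : first ∈ A
  last_mem : last ∈ B
  interior_not_mem : ∀ v ∈ walk.support.tail.dropLast, v ∉ A ∧ v ∉ B

/-- `S` separates `A` from `B` in `G`: every `A`-`B`-path meets `S`. -/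
def IsSeparator {V : Type*} (G : SimpleGraph V) (A B S : Set V) : Prop :=
  ∀ P : ABPath G A B, ∃ v ∈ P.walk.support, v ∈ S


namespace PhyloTree

variable {X : Type*}

section Aux

variable (T : PhyloTree X)

lemma finV : Finite T.V := by
  have := T.fintypeV; exact Finite.of_fintype _

lemma path_unique {v w : T.V} (p q : T.G.Path v w) : p = q :=
  (isAcyclic_iff_path_unique.mp T.isTree.IsAcyclic) p q

lemma reach_of_not_edge {a b : T.V} (e : Sym2 T.V) (w : T.G.Walk a b)
    (hw : ∀ e' ∈ w.edges, e' ∉ ({e} : Set (Sym2 T.V))) :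
    (T.G.deleteEdges {e}).Reachable a b :=
  ⟨w.toDeleteEdges {e} hw⟩

/-- An edge on a path separates its endpoints in the tree. -/
lemma sepEdge {a b : T.V} (w : T.G.Walk a b) (hw : w.IsPath) {e : Sym2 T.V}
    (he : e ∈ w.edges) : ¬ (T.G.deleteEdges {e}).Reachable a b := by
  classical
  intro hr
  obtain ⟨w'⟩ := hr
  let p' := w'.toPath
  have hsub : ∀ e' ∈ (p' : (T.G.deleteEdges {e}).Walk a b).edges, e' ∈ T.G.edgeSet := by
    intro e' he'
    have h1 := (p' : (T.G.deleteEdges {e}).Walk a b).edges_subset_edgeSet he'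
    rw [edgeSet_deleteEdges] at h1
    exact h1.1
  let w'' : T.G.Walk a b := (p' : (T.G.deleteEdges {e}).Walk a b).transfer T.G hsub
  have hw'' : w''.IsPath := p'.2.transfer hsub
  have heq : (⟨w, hw⟩ : T.G.Path a b) = ⟨w'', hw''⟩ := T.path_unique _ _
  have hne : e ∉ w''.edges := by
    intro hmem
    rw [Walk.edges_transfer] at hmem
    have h1 := (p' : (T.G.deleteEdges {e}).Walk a b).edges_subset_edgeSet hmem
    rw [edgeSet_deleteEdges] at h1
    exact h1.2 rfl
  apply hne
  have : w = w'' := congrArg Subtype.val heq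
  rwa [← this]

lemma bridge {u v : T.V} (h : T.G.Adj u v) :
    ¬ (T.G.deleteEdges {s(u, v)}).Reachable u v := by
  classical
  apply T.sepEdge (Walk.cons h Walk.nil)
  · simp [Walk.isPath_def, h.ne]
  · simp

lemma reach_or {c d : T.V} (w : T.G.Walk c d) {u v : T.V}
    (hd : (T.G.deleteEdges {s(u, v)}).Reachable d u ∨ (T.G.deleteEdges {s(u, v)}).Reachable d v) :
    (T.G.deleteEdges {s(u, v)}).Reachable c u ∨ (T.G.deleteEdges {s(u, v)}).Reachable c v := by
  induction w with
  | nil => exact hd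
  | cons h' p ih =>
    rename_i c' m _
    rcases ih hd with hh | hh
    · by_cases he : s(c', m) = s(u, v)
      · rcases Sym2.eq_iff.mp he with ⟨rfl, rfl⟩ | ⟨rfl, rfl⟩
        · exact Or.inl (Reachable.refl _)
        · exact Or.inr (Reachable.refl _)
      · have hadj : (T.G.deleteEdges {s(u, v)}).Adj c' m := by
          rw [deleteEdges_adj]; exact ⟨h', by simpa using he⟩
        exact Or.inl (hadj.reachable.trans hh)
    · by_cases he : s(c', m) = s(u, v)
      · rcases Sym2.eq_iff.mp he with ⟨rfl, rfl⟩ | ⟨rfl, rfl⟩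
        · exact Or.inl (Reachable.refl _)
        · exact Or.inr (Reachable.refl _)
      · have hadj : (T.G.deleteEdges {s(u, v)}).Adj c' m := by
          rw [deleteEdges_adj]; exact ⟨h', by simpa using he⟩
        exact Or.inr (hadj.reachable.trans hh)

/-- Every vertex lies on one of the two sides of an edge. -/
lemma partition {u v : T.V} (h : T.G.Adj u v) (c : T.V) :
    (T.G.deleteEdges {s(u, v)}).Reachable c u ∨ (T.G.deleteEdges {s(u, v)}).Reachable c v := by
  obtain ⟨w⟩ := T.isTree.isConnected.preconnected c u
  exact T.reach_or w (Or.inl (Reachable.refl _))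

/-- Along any walk whose endpoints get different colors there is a changing edge. -/
lemma exists_change {g : T.V → Bool} : ∀ {a b : T.V} (w : T.G.Walk a b), g a ≠ g b →
    ∃ p q, s(p, q) ∈ w.edges ∧ T.G.Adj p q ∧ g p ≠ g q := by
  intro a b w
  induction w with
  | nil => intro hc; exact absurd rfl hc
  | @cons a c b h' p ih =>
    intro hab
    by_cases hac : g a = g c
    · obtain ⟨p', q', hm, hadj, hne⟩ := ih (fun hcb => hab (hac.trans hcb))
      exact ⟨p', q', by simp [hm], hadj, hne⟩
    · exact ⟨a, c, by simp, h', hac⟩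

lemma nbr_singleton {ℓ : X} {u : T.V} (h : T.G.Adj (T.leaf ℓ) u) :
    T.G.neighborSet (T.leaf ℓ) = {u} := by
  have h1 : (T.G.neighborSet (T.leaf ℓ)).ncard ≤ 1 := (T.leaf_iff _).mpr ⟨ℓ, rfl⟩
  have h2 : (T.G.neighborSet (T.leaf ℓ)).ncard = 1 := by
    rcases T.binary (T.leaf ℓ) with h' | h'
    · exact h'
    · omega
  obtain ⟨a, ha⟩ := Set.ncard_eq_one.mp h2
  have hu : u ∈ T.G.neighborSet (T.leaf ℓ) := h
  rw [ha] at hu ⊢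
  rw [Set.mem_singleton_iff.mp hu]

lemma first_edge {ℓ : X} {u : T.V} (h : T.G.Adj (T.leaf ℓ) u) {d : T.V}
    (w : T.G.Walk (T.leaf ℓ) d) (hd : d ≠ T.leaf ℓ) : s(T.leaf ℓ, u) ∈ w.edges := by
  cases w with
  | nil => exact absurd rfl hd
  | cons h' p =>
    rename_i v
    have hv : v ∈ T.G.neighborSet (T.leaf ℓ) := h'
    rw [T.nbr_singleton h] at hv
    have hv' : v = u := Set.mem_singleton_iff.mp hv
    subst hv'
    simp

/-- A path not starting or ending at a pendant vertex avoids it. -/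
lemma leaf_not_mem_support {ℓ : X} {u : T.V} (h : T.G.Adj (T.leaf ℓ) u)
    {a b : T.V} (w : T.G.Walk a b) (hw : w.IsPath)
    (ha : a ≠ T.leaf ℓ) (hb : b ≠ T.leaf ℓ) : T.leaf ℓ ∉ w.support := by
  classical
  intro hs
  have hsplit := w.take_spec hs
  set w1 := w.takeUntil (T.leaf ℓ) hs with hw1
  set w2 := w.dropUntil (T.leaf ℓ) hs with hw2
  have h2 : s(T.leaf ℓ, u) ∈ w2.edges := T.first_edge h w2 hb
  have h1 : s(T.leaf ℓ, u) ∈ w1.edges := by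
    have := T.first_edge h w1.reverse ha
    rwa [Walk.edges_reverse, List.mem_reverse] at this
  have hnd : (w1.append w2).edges.Nodup := by rw [hsplit]; exact hw.isTrail.edges_nodup
  rw [Walk.edges_append] at hnd
  exact (List.disjoint_of_nodup_append hnd) h1 h2

lemma avoid_pendant_edge {ℓ : X} {u : T.V} (h : T.G.Adj (T.leaf ℓ) u)
    {a b : T.V} (w : T.G.Walk a b) (hw : w.IsPath)
    (ha : a ≠ T.leaf ℓ) (hb : b ≠ T.leaf ℓ) :
    ∀ e' ∈ w.edges, e' ∉ ({s(u, T.leaf ℓ)} : Set (Sym2 T.V)) := by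
  intro e' he' hmem
  rw [Set.mem_singleton_iff] at hmem
  subst hmem
  exact T.leaf_not_mem_support h w hw ha hb (w.snd_mem_support_of_mem_edges he')

lemma side_pendant {ℓ : X} {u : T.V} (h : T.G.Adj (T.leaf ℓ) u) :
    T.side (T.leaf ℓ) u = {ℓ} := by
  ext z
  simp only [side, Set.mem_setOf_eq, Set.mem_singleton_iff]
  constructor
  · intro hz
    by_contra hne
    have hlne : T.leaf z ≠ T.leaf ℓ := fun hc => hne (T.leaf_inj hc)
    obtain ⟨w⟩ := hz
    have hnn : ¬ w.reverse.Nil := Walk.not_nil_of_ne hlne.symm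
    obtain ⟨v, h', q, hq⟩ := Walk.not_nil_iff.mp hnn
    have hadj : T.G.Adj (T.leaf ℓ) v := (deleteEdges_adj.mp h').1
    have hv : v ∈ T.G.neighborSet (T.leaf ℓ) := hadj
    rw [T.nbr_singleton h] at hv
    rw [Set.mem_singleton_iff.mp hv] at h'
    exact (deleteEdges_adj.mp h').2 rfl
  · rintro rfl
    exact Reachable.refl _

lemma side_pendant_compl {ℓ : X} {u : T.V} (h : T.G.Adj (T.leaf ℓ) u)
    {z : X} (hz : z ≠ ℓ) : z ∈ T.side u (T.leaf ℓ) := by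
  classical
  have hr : T.G.Reachable (T.leaf z) u := T.isTree.isConnected.preconnected _ _
  let p := hr.some.toPath
  have hzu : T.leaf z ≠ T.leaf ℓ := fun hc => hz (T.leaf_inj hc)
  have huℓ : u ≠ T.leaf ℓ := h.ne'
  have havoid := T.avoid_pendant_edge h (p : T.G.Walk (T.leaf z) u) p.2 hzu huℓ
  exact ⟨(p : T.G.Walk (T.leaf z) u).toDeleteEdges {s(u, T.leaf ℓ)} havoid⟩

lemma mem_side_iff {u v : T.V} {z : X} :
    z ∈ T.side u v ↔ (T.G.deleteEdges {s(u, v)}).Reachable (T.leaf z) u := Iff.rfl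

end Aux

end PhyloTree

namespace PhyloTree

variable {X : Type*}

section Score

variable (T : PhyloTree X)

lemma side_sep {u v : T.V} {a b : X}
    (hr : (T.G.deleteEdges {s(u, v)}).Reachable (T.leaf a) (T.leaf b)) :
    (a ∈ T.side u v ↔ b ∈ T.side u v) :=
  ⟨fun h => hr.symm.trans h, fun h => hr.trans h⟩

lemma sep_of_not_reach {u v : T.V} (hadj : T.G.Adj u v) {a b : X}
    (h : ¬ (T.G.deleteEdges {s(u, v)}).Reachable (T.leaf a) (T.leaf b)) :
    ¬ (a ∈ T.side u v ↔ b ∈ T.side u v) := by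
  intro hiff
  by_cases haS : a ∈ T.side u v
  · exact h (haS.trans (hiff.mp haS).symm)
  · have hbS : b ∉ T.side u v := fun hb => haS (hiff.mpr hb)
    rcases T.partition hadj (T.leaf a) with ha | ha
    · exact haS ha
    rcases T.partition hadj (T.leaf b) with hb | hb
    · exact hbS hb
    · exact h (ha.trans hb.symm)

variable [Finite X]

lemma parsimony_le_of_sep (f : X → Bool) (Fam : Set (Set X)) (hsub : Fam ⊆ T.splits)
    (hsep : ∀ a b : X, f a ≠ f b → ∃ S ∈ Fam, ¬ (a ∈ S ↔ b ∈ S)) :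
    T.parsimony f ≤ Fam.ncard := by
  classical
  have hfin := T.finV
  obtain ⟨v₀⟩ := T.isTree.isConnected.nonempty
  have hch : ∀ S : Set X, ∃ pq : T.V × T.V, S ∈ Fam →
      T.G.Adj pq.1 pq.2 ∧ S = T.side pq.1 pq.2 := by
    intro S
    by_cases hS : S ∈ Fam
    · obtain ⟨u, v, hadj, hSide⟩ := hsub hS
      exact ⟨(u, v), fun _ => ⟨hadj, hSide⟩⟩
    · exact ⟨(v₀, v₀), fun h => absurd h hS⟩
  choose es hes using hch
  set E : Set (Sym2 T.V) := (fun S => s((es S).1, (es S).2)) '' Fam with hE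
  set g : T.V → Bool := fun v =>
    if (∃ a, f a = true ∧ (T.G.deleteEdges E).Reachable (T.leaf a) v) then true else false with hg
  have hinv : ∀ v v', (T.G.deleteEdges E).Reachable v v' → g v = g v' := by
    intro v v' hr
    have hiff : (∃ a, f a = true ∧ (T.G.deleteEdges E).Reachable (T.leaf a) v) ↔
        (∃ a, f a = true ∧ (T.G.deleteEdges E).Reachable (T.leaf a) v') :=
      ⟨fun ⟨a, ha, hra⟩ => ⟨a, ha, hra.trans hr⟩, fun ⟨a, ha, hra⟩ => ⟨a, ha, hra.trans hr.symm⟩⟩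
    simp only [hg, hiff]
  have hext : ∀ a : X, g (T.leaf a) = f a := by
    intro a
    cases hfa : f a with
    | true =>
      simp only [hg]
      rw [if_pos ⟨a, hfa, Reachable.refl _⟩]
    | false =>
      simp only [hg]
      rw [if_neg]
      rintro ⟨b, hb, hrb⟩
      have hfab : f b ≠ f a := by rw [hb, hfa]; simp
      obtain ⟨S, hSF, hSsep⟩ := hsep b a hfab
      obtain ⟨hadj, hSide⟩ := hes S hSF
      have hEmem : s((es S).1, (es S).2) ∈ E := ⟨S, hSF, rfl⟩
      have hmono : T.G.deleteEdges E ≤ T.G.deleteEdges {s((es S).1, (es S).2)} :=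
        deleteEdges_anti (by simpa using hEmem)
      have hr' : (T.G.deleteEdges {s((es S).1, (es S).2)}).Reachable (T.leaf b) (T.leaf a) :=
        hrb.mono hmono
      apply hSsep
      rw [hSide]
      exact T.side_sep hr'
  have hsubset : {e ∈ T.G.edgeSet | ¬ (Sym2.map g e).IsDiag} ⊆ E := by
    intro e
    induction e using Sym2.ind with
    | _ p q =>
      rintro ⟨hedge, hdiag⟩
      by_contra hne
      have hadj : (T.G.deleteEdges E).Adj p q := deleteEdges_adj.mpr ⟨T.G.mem_edgeSet.mp hedge, hne⟩
      apply hdiag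
      rw [Sym2.map_pair_eq, Sym2.mk_isDiag_iff]
      exact hinv p q hadj.reachable
  have hEfin : E.Finite := (Set.toFinite Fam).image _
  have hle : T.changingNumber g ≤ E.ncard := Set.ncard_le_ncard hsubset hEfin
  have hle2 : E.ncard ≤ Fam.ncard := Set.ncard_image_le (Set.toFinite _)
  have hp : T.parsimony f ≤ T.changingNumber g := Nat.sInf_le ⟨g, hext, rfl⟩
  omega

lemma exists_sep (f : X → Bool) :
    ∃ Fam : Set (Set X), Fam ⊆ T.splits ∧ Fam.ncard ≤ T.parsimony f ∧
      ∀ a b : X, f a ≠ f b → ∃ S ∈ Fam, ¬ (a ∈ S ↔ b ∈ S) := by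
  classical
  have hfin := T.finV
  obtain ⟨v₀⟩ := T.isTree.isConnected.nonempty
  set g₀ : T.V → Bool := fun v => if (∃ a, f a = true ∧ T.leaf a = v) then true else false with hg₀
  have hext₀ : ∀ a : X, g₀ (T.leaf a) = f a := by
    intro a
    cases hfa : f a with
    | true =>
      simp only [hg₀]
      rw [if_pos ⟨a, hfa, rfl⟩]
    | false =>
      simp only [hg₀]
      rw [if_neg]
      rintro ⟨b, hb, hleaf⟩
      have hba := T.leaf_inj hleaf
      rw [hba] at hb
      rw [hb] at hfa
      exact Bool.true_eq_false.mp hfa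
  have hne : {n : ℕ | ∃ g : T.V → Bool, (∀ z : X, g (T.leaf z) = f z) ∧
      T.changingNumber g = n}.Nonempty := ⟨_, g₀, hext₀, rfl⟩
  obtain ⟨g, hext, hchg⟩ := Nat.sInf_mem hne
  set CE : Set (Sym2 T.V) := {e ∈ T.G.edgeSet | ¬ (Sym2.map g e).IsDiag} with hCEdef
  have hCEcard : CE.ncard = T.parsimony f := hchg
  have hch : ∀ e : Sym2 T.V, ∃ pq : T.V × T.V, e ∈ CE →
      (T.G.Adj pq.1 pq.2 ∧ e = s(pq.1, pq.2)) := by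
    intro e
    induction e using Sym2.ind with
    | _ p q =>
      by_cases he : s(p, q) ∈ CE
      · exact ⟨(p, q), fun _ => ⟨T.G.mem_edgeSet.mp he.1, rfl⟩⟩
      · exact ⟨(v₀, v₀), fun h => absurd h he⟩
  choose ep hep using hch
  refine ⟨(fun e => T.side (ep e).1 (ep e).2) '' CE, ?_, ?_, ?_⟩
  · rintro S ⟨e, heCE, rfl⟩
    exact ⟨(ep e).1, (ep e).2, (hep e heCE).1, rfl⟩
  · have h1 : ((fun e => T.side (ep e).1 (ep e).2) '' CE).ncard ≤ CE.ncard :=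
      Set.ncard_image_le (Set.toFinite _)
    rw [← hCEcard]
    exact h1
  · intro a b hfab
    have hga : g (T.leaf a) ≠ g (T.leaf b) := by rw [hext, hext]; exact hfab
    obtain ⟨w0⟩ := T.isTree.isConnected.preconnected (T.leaf a) (T.leaf b)
    obtain ⟨wp, hwp⟩ := w0.toPath
    obtain ⟨p1, q1, hmem, hadj1, hne1⟩ := T.exists_change wp hga
    have heCE : s(p1, q1) ∈ CE := ⟨wp.edges_subset_edgeSet hmem, by
      rw [Sym2.map_pair_eq, Sym2.mk_isDiag_iff]; exact hne1⟩
    have hnr : ¬ (T.G.deleteEdges {s(p1, q1)}).Reachable (T.leaf a) (T.leaf b) :=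
      T.sepEdge wp hwp hmem
    obtain ⟨hadj2, hform⟩ := hep _ heCE
    refine ⟨T.side (ep s(p1, q1)).1 (ep s(p1, q1)).2, ⟨_, heCE, rfl⟩, ?_⟩
    apply T.sep_of_not_reach hadj2
    rw [← hform]
    exact hnr

end Score

section Cherry

variable (T : PhyloTree X) {x y : X} {u : T.V}

lemma dichot (hxu : T.G.Adj (T.leaf x) u) (hyu : T.G.Adj (T.leaf y) u)
    {S : Set X} (hS : S ∈ T.splits) :
    (S \ {x, y} = ∅ ∨ S \ {x, y} = ({x, y} : Set X)ᶜ) ∨ (x ∈ S ↔ y ∈ S) := by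
  obtain ⟨u', v', hadj, rfl⟩ := hS
  by_cases h1 : s(u', v') = s(T.leaf x, u)
  · rcases Sym2.eq_iff.mp h1 with ⟨rfl, rfl⟩ | ⟨rfl, rfl⟩
    · left; left
      rw [T.side_pendant hxu]
      apply Set.diff_eq_empty.mpr
      intro z hz
      rw [Set.mem_singleton_iff.mp hz]
      exact Set.mem_insert x {y}
    · left; right
      apply Set.eq_of_subset_of_subset
      · intro z hz
        exact hz.2
      · intro z hz
        have hzx : z ≠ x ∧ z ≠ y := by simpa using hz
        exact ⟨T.side_pendant_compl hxu hzx.1, by simp [hzx.1, hzx.2]⟩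
  · by_cases h2 : s(u', v') = s(T.leaf y, u)
    · rcases Sym2.eq_iff.mp h2 with ⟨rfl, rfl⟩ | ⟨rfl, rfl⟩
      · left; left
        rw [T.side_pendant hyu]
        apply Set.diff_eq_empty.mpr
        intro z hz
        rw [Set.mem_singleton_iff.mp hz]
        exact Set.mem_insert_of_mem x rfl
      · left; right
        apply Set.eq_of_subset_of_subset
        · intro z hz
          exact hz.2
        · intro z hz
          have hzx : z ≠ x ∧ z ≠ y := by simpa using hz
          exact ⟨T.side_pendant_compl hyu hzx.2, by simp [hzx.1, hzx.2]⟩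
    · right
      have hxe : s(T.leaf x, u) ∉ ({s(u', v')} : Set (Sym2 T.V)) := by
        simp only [Set.mem_singleton_iff]
        exact fun hc => h1 hc.symm
      have hye : s(T.leaf y, u) ∉ ({s(u', v')} : Set (Sym2 T.V)) := by
        simp only [Set.mem_singleton_iff]
        exact fun hc => h2 hc.symm
      have hye' : s(u, T.leaf y) ∉ ({s(u', v')} : Set (Sym2 T.V)) := by
        intro hc
        rw [Set.mem_singleton_iff, Sym2.eq_swap] at hc
        exact hye (Set.mem_singleton_iff.mpr hc)
      have w : (T.G.deleteEdges {s(u', v')}).Walk (T.leaf x) (T.leaf y) :=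
        Walk.cons (deleteEdges_adj.mpr ⟨hxu, hxe⟩)
          (Walk.cons (deleteEdges_adj.mpr ⟨hyu.symm, hye'⟩) Walk.nil)
      exact T.side_sep ⟨w⟩

end Cherry

end PhyloTree

lemma bool_aux {p q r : Bool} (h1 : p ≠ q) (h2 : p ≠ r) : r = q := by
  cases p <;> cases q <;> cases r <;> simp_all

set_option maxHeartbeats 1000000 in
/-- if `f ∈ A_k(T)` with `f(x) ≠ f(y)` for a cherry `[x,y]` of `T`,
then the restriction of `f` to `X \ {x,y}` lies in `A_{k-1}(T²)`, where `T²` is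
obtained from `T` by the type-2 cherry reduction of `[x,y]`. -/
theorem stmt_6 {X : Type*} [Fintype X] (k : ℕ) (hk : 1 ≤ k)
    (T : PhyloTree X) (hn : 4 ≤ Fintype.card X) (x y : X)
    (T2 : PhyloTree {z : X // z ≠ x ∧ z ≠ y}) (hred : IsRed2 T x y T2)
    (f : X → Bool) (hf : f ∈ T.Ak k) (hxy : f x ≠ f y) :
    (fun z : {z : X // z ≠ x ∧ z ≠ y} => f z.val) ∈ T2.Ak (k - 1) := by
  classical
  obtain ⟨⟨hxyne, u, hxu, hyu⟩, hsplits⟩ := hred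
  have hk' : T.parsimony f = k := hf
  set f2 : {z : X // z ≠ x ∧ z ≠ y} → Bool := fun z => f z.val with hf2def
  -- UPPER BOUND: T2.parsimony f2 ≤ k - 1
  have hupper : T2.parsimony f2 ≤ k - 1 := by
    obtain ⟨Fam, hsub, hcard, hsep⟩ := T.exists_sep f
    obtain ⟨S0, hS0F, hS0sep⟩ := hsep x y hxy
    have hS0excl : S0 \ {x, y} = ∅ ∨ S0 \ {x, y} = ({x, y} : Set X)ᶜ := by
      rcases T.dichot hxu hyu (hsub hS0F) with hex | hiff
      · exact hex
      · exact absurd hiff hS0sep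
    set Ff : Set (Set X) :=
      {S ∈ Fam | ¬ (S \ {x, y} = ∅ ∨ S \ {x, y} = ({x, y} : Set X)ᶜ)} with hFf
    have hFfsub : Ff ⊆ Fam \ {S0} := by
      rintro S ⟨hSF, hSex⟩
      refine ⟨hSF, ?_⟩
      intro hc
      rw [Set.mem_singleton_iff] at hc
      subst hc
      exact hSex hS0excl
    have hcard2 : Ff.ncard ≤ k - 1 := by
      have h1 : (insert S0 (Fam \ {S0})).ncard = (Fam \ {S0}).ncard + 1 :=
        Set.ncard_insert_of_notMem (by simp) (Set.toFinite _)
      have h2 : insert S0 (Fam \ {S0}) = Fam := by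
        rw [Set.insert_diff_singleton, Set.insert_eq_self.mpr hS0F]
      rw [h2] at h1
      have h3 := Set.ncard_le_ncard hFfsub (Set.toFinite _)
      omega
    set F2 : Set (Set {z : X // z ≠ x ∧ z ≠ y}) :=
      (fun S => (Subtype.val ⁻¹' S : Set {z : X // z ≠ x ∧ z ≠ y})) '' Ff with hF2
    have hmemiff : ∀ S ∈ Ff, ∃ S₂ ∈ T2.splits,
        (Subtype.val '' S₂ : Set X) = S \ {x, y} := by
      intro S hS
      have hmem : S \ {x, y} ∈
          (fun S2 : Set {z : X // z ≠ x ∧ z ≠ y} => Subtype.val '' S2) '' T2.splits := by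
        rw [hsplits]
        refine ⟨⟨S, hsub hS.1, rfl⟩, ?_⟩
        intro hc
        apply hS.2
        simpa using hc
      obtain ⟨S₂, hS₂, heq⟩ := hmem
      exact ⟨S₂, hS₂, heq⟩
    have hF2sub : F2 ⊆ T2.splits := by
      rintro _ ⟨S, hS, rfl⟩
      obtain ⟨S₂, hS₂, heq⟩ := hmemiff S hS
      have hkey : (Subtype.val ⁻¹' S : Set {z : X // z ≠ x ∧ z ≠ y}) = S₂ := by
        ext z
        have hz : z.val ∈ Subtype.val '' S₂ ↔ z ∈ S₂ :=
          Subtype.val_injective.mem_set_image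
        rw [Set.mem_preimage, ← hz, heq]
        simp [z.2.1, z.2.2]
      show (Subtype.val ⁻¹' S : Set {z : X // z ≠ x ∧ z ≠ y}) ∈ T2.splits
      rw [hkey]
      exact hS₂
    have hF2card : F2.ncard ≤ k - 1 :=
      le_trans (Set.ncard_image_le (Set.toFinite _)) hcard2
    have hF2sep : ∀ a b : {z : X // z ≠ x ∧ z ≠ y}, f2 a ≠ f2 b →
        ∃ S₂ ∈ F2, ¬ (a ∈ S₂ ↔ b ∈ S₂) := by
      intro a b hab
      obtain ⟨S, hSF, hSsep⟩ := hsep a.val b.val hab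
      have hSf : S ∈ Ff := by
        refine ⟨hSF, ?_⟩
        rintro (hem | hco)
        · apply hSsep
          constructor
          · intro h
            exfalso
            have : a.val ∈ S \ {x, y} := ⟨h, by simp [a.2.1, a.2.2]⟩
            rw [hem] at this
            exact this
          · intro h
            exfalso
            have : b.val ∈ S \ {x, y} := ⟨h, by simp [b.2.1, b.2.2]⟩
            rw [hem] at this
            exact this
        · apply hSsep
          constructor
          · intro h
            by_contra hb
            have : b.val ∈ ({x, y} : Set X)ᶜ := by simp [b.2.1, b.2.2]
            rw [← hco] at this
            exact hb this.1
          · intro h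
            by_contra ha
            have : a.val ∈ ({x, y} : Set X)ᶜ := by simp [a.2.1, a.2.2]
            rw [← hco] at this
            exact ha this.1
      refine ⟨_, ⟨S, hSf, rfl⟩, ?_⟩
      simpa [Set.mem_preimage] using hSsep
    exact le_trans (T2.parsimony_le_of_sep f2 F2 hF2sub hF2sep) hF2card
  -- LOWER BOUND: k ≤ T2.parsimony f2 + 1
  have hlower : k ≤ T2.parsimony f2 + 1 := by
    obtain ⟨F2, hsub2, hcard2, hsep2⟩ := T2.exists_sep f2
    have hlift : ∀ S₂ : Set {z : X // z ≠ x ∧ z ≠ y}, ∃ S : Set X, S₂ ∈ F2 →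
        S ∈ T.splits ∧ (Subtype.val '' S₂ : Set X) = S \ {x, y} ∧ (x ∈ S ↔ y ∈ S) := by
      intro S₂
      by_cases h : S₂ ∈ F2
      · have hmem : (Subtype.val '' S₂ : Set X) ∈
            (fun S2 : Set {z : X // z ≠ x ∧ z ≠ y} => Subtype.val '' S2) '' T2.splits :=
          ⟨S₂, hsub2 h, rfl⟩
        rw [hsplits] at hmem
        obtain ⟨⟨S, hSsp, heq⟩, hnot⟩ := hmem
        have hiff : x ∈ S ↔ y ∈ S := by
          rcases T.dichot hxu hyu hSsp with hex | hiff
          · exfalso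
            apply hnot
            rw [heq]
            rcases hex with h' | h'
            · rw [h']; exact Set.mem_insert _ _
            · rw [h']; exact Set.mem_insert_of_mem _ rfl
          · exact hiff
        exact ⟨S, fun _ => ⟨hSsp, heq, hiff⟩⟩
      · exact ⟨∅, fun hh => absurd hh h⟩
    choose pick hpick using hlift
    have hmm : ∀ S₂ ∈ F2, ∀ c : X, ∀ hc : c ≠ x ∧ c ≠ y,
        (c ∈ pick S₂ ↔ (⟨c, hc⟩ : {z : X // z ≠ x ∧ z ≠ y}) ∈ S₂) := by
      intro S₂ hS₂ c hc
      obtain ⟨hsp, heq, hiff⟩ := hpick S₂ hS₂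
      constructor
      · intro h
        have hmem : c ∈ pick S₂ \ {x, y} := ⟨h, by simp [hc.1, hc.2]⟩
        rw [← heq] at hmem
        obtain ⟨z, hz, hzc⟩ := hmem
        have hzz : z = ⟨c, hc⟩ := Subtype.ext hzc
        rwa [← hzz]
      · intro h
        have hmem : c ∈ Subtype.val '' S₂ := ⟨⟨c, hc⟩, h, rfl⟩
        rw [heq] at hmem
        exact hmem.1
    have hxsplit : ({x} : Set X) ∈ T.splits :=
      ⟨T.leaf x, u, hxu, (T.side_pendant hxu).symm⟩
    have hysplit : ({y} : Set X) ∈ T.splits :=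
      ⟨T.leaf y, u, hyu, (T.side_pendant hyu).symm⟩
    have hcardgen : ∀ E : Set X, ((fun S₂ => pick S₂) '' F2 ∪ {E}).ncard ≤ F2.ncard + 1 := by
      intro E
      refine le_trans (Set.ncard_union_le _ _) ?_
      have h1 : ((fun S₂ => pick S₂) '' F2).ncard ≤ F2.ncard :=
        Set.ncard_image_le (Set.toFinite _)
      have h2 : ({E} : Set (Set X)).ncard = 1 := Set.ncard_singleton _
      omega
    have hgood : ∃ Fam : Set (Set X), Fam ⊆ T.splits ∧ Fam.ncard ≤ F2.ncard + 1 ∧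
        (∀ a b : X, f a ≠ f b → ∃ S ∈ Fam, ¬ (a ∈ S ↔ b ∈ S)) := by
      by_cases hQ : ∀ c : X, ∀ hc : c ≠ x ∧ c ≠ y, f c ≠ f y →
          ∃ S₂ ∈ F2, ¬ (c ∈ pick S₂ ↔ y ∈ pick S₂)
      · refine ⟨(fun S₂ => pick S₂) '' F2 ∪ {({x} : Set X)}, ?_, hcardgen _, ?_⟩
        · rintro S (⟨S₂, hS₂, rfl⟩ | hS)
          · exact (hpick S₂ hS₂).1
          · rw [Set.mem_singleton_iff.mp hS]
            exact hxsplit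
        · intro a b hab
          by_cases hax : a = x
          · have hbx : b ≠ x := fun hc => hab (by rw [hax, hc])
            exact ⟨{x}, Or.inr rfl, by simp [hax, hbx]⟩
          by_cases hbx : b = x
          · exact ⟨{x}, Or.inr rfl, by simp [hbx, hax]⟩
          by_cases hay : a = y
          · have hby : b ≠ y := fun hc => hab (by rw [hay, hc])
            have hfb : f b ≠ f y := by
              rw [← hay]; exact fun hc => hab hc.symm
            obtain ⟨S₂, hS₂, hnot⟩ := hQ b ⟨hbx, hby⟩ hfb
            refine ⟨pick S₂, Or.inl ⟨S₂, hS₂, rfl⟩, ?_⟩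
            rw [hay]
            exact fun hiff => hnot hiff.symm
          by_cases hby : b = y
          · have hfa : f a ≠ f y := by rw [← hby]; exact hab
            obtain ⟨S₂, hS₂, hnot⟩ := hQ a ⟨hax, hay⟩ hfa
            refine ⟨pick S₂, Or.inl ⟨S₂, hS₂, rfl⟩, ?_⟩
            rw [hby]
            exact hnot
          · obtain ⟨S₂, hS₂, hnot⟩ := hsep2 ⟨a, hax, hay⟩ ⟨b, hbx, hby⟩ hab
            refine ⟨pick S₂, Or.inl ⟨S₂, hS₂, rfl⟩, ?_⟩
            rw [hmm S₂ hS₂ a ⟨hax, hay⟩, hmm S₂ hS₂ b ⟨hbx, hby⟩]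
            exact hnot
      · push_neg at hQ
        obtain ⟨c₀, hc₀, hfc₀, hall⟩ := hQ
        refine ⟨(fun S₂ => pick S₂) '' F2 ∪ {({y} : Set X)}, ?_, hcardgen _, ?_⟩
        · rintro S (⟨S₂, hS₂, rfl⟩ | hS)
          · exact (hpick S₂ hS₂).1
          · rw [Set.mem_singleton_iff.mp hS]
            exact hysplit
        · intro a b hab
          by_cases hay : a = y
          · have hby : b ≠ y := fun hc => hab (by rw [hay, hc])
            exact ⟨{y}, Or.inr rfl, by simp [hay, hby]⟩
          by_cases hby : b = y
          · exact ⟨{y}, Or.inr rfl, by simp [hby, hay]⟩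
          by_cases hax : a = x
          · have hbx : b ≠ x := fun hc => hab (by rw [hax, hc])
            have hfb : f b = f y := bool_aux hxy (by rw [← hax]; exact hab)
            have hfc₀b : f c₀ ≠ f b := by rw [hfb]; exact hfc₀
            obtain ⟨S₂, hS₂, hnot⟩ := hsep2 ⟨c₀, hc₀⟩ ⟨b, hbx, hby⟩ hfc₀b
            refine ⟨pick S₂, Or.inl ⟨S₂, hS₂, rfl⟩, ?_⟩
            have h1 : c₀ ∈ pick S₂ ↔ y ∈ pick S₂ := hall S₂ hS₂
            have h2 : x ∈ pick S₂ ↔ y ∈ pick S₂ := (hpick S₂ hS₂).2.2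
            rw [← hmm S₂ hS₂ c₀ hc₀, ← hmm S₂ hS₂ b ⟨hbx, hby⟩] at hnot
            rw [hax]
            tauto
          by_cases hbx : b = x
          · have hfa : f a = f y := bool_aux hxy (by
              rw [← hbx]; exact fun hc => hab hc.symm)
            have hfc₀a : f c₀ ≠ f a := by rw [hfa]; exact hfc₀
            obtain ⟨S₂, hS₂, hnot⟩ := hsep2 ⟨c₀, hc₀⟩ ⟨a, hax, hay⟩ hfc₀a
            refine ⟨pick S₂, Or.inl ⟨S₂, hS₂, rfl⟩, ?_⟩
            have h1 : c₀ ∈ pick S₂ ↔ y ∈ pick S₂ := hall S₂ hS₂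
            have h2 : x ∈ pick S₂ ↔ y ∈ pick S₂ := (hpick S₂ hS₂).2.2
            rw [← hmm S₂ hS₂ c₀ hc₀, ← hmm S₂ hS₂ a ⟨hax, hay⟩] at hnot
            rw [hbx]
            tauto
          · obtain ⟨S₂, hS₂, hnot⟩ := hsep2 ⟨a, hax, hay⟩ ⟨b, hbx, hby⟩ hab
            refine ⟨pick S₂, Or.inl ⟨S₂, hS₂, rfl⟩, ?_⟩
            rw [hmm S₂ hS₂ a ⟨hax, hay⟩, hmm S₂ hS₂ b ⟨hbx, hby⟩]
            exact hnot
    obtain ⟨Fam, hsubF, hcardF, hsepF⟩ := hgood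
    have hle := T.parsimony_le_of_sep f Fam hsubF hsepF
    omega
  show T2.parsimony f2 = k - 1
  omega
end

section
/- Let T be a binary phylogenetic X-tree and let f : X → {a,b} be a binary character. Then the parsimony score l(f,T) is equal to the maximum number of edge-disjoint A_f-B_f-paths in T. -/
open SimpleGraph

/-
The changing edges of an extension of `f` form an edge cut between `A_f` and `B_f`, and every
`A_f`-`B_f`-path crosses it, so there are at most `l(f,T)` edge-disjoint such paths. For the
converse we prove the edge version of Menger's theorem for finite forests and arbitrary disjoint
terminal sets `A`, `B`, by induction on the number of edges. An edge with both ends in `A ∪ B`,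
or a pendant edge at a leaf outside `A ∪ B`, is simply deleted. Otherwise let `u` be the second
vertex of a longest path: `u ∉ A ∪ B`, and all neighbours of `u` but one, `t`, are leaves in
`A ∪ B`. If two of them lie on different sides, delete the two-edge walk through `u`; if all lie
in `A`, delete the edges to them and put `u` into `A`. Then only one walk can start at `u`
(through `t`), and it is extended by one of the deleted edges.
-/

namespace SimpleGraph

variable {V : Type*} {G : SimpleGraph V}

lemma IsAcyclic.exists_pendant_star [Finite V] (hG : G.IsAcyclic) {a b : V} (hab : G.Adj a b) :
    ∃ u t x, G.Adj u x ∧ x ≠ t ∧ ∀ w, G.Adj u w → w ≠ t → ∀ r, G.Adj w r → r = u := by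
  have : Nonempty V := ⟨a⟩
  obtain ⟨c, z, M, hM, hmax⟩ := Walk.exists_isPath_forall_isPath_length_le_length G
  cases M with
  | nil => simpa using hmax _ _ (Walk.cons hab .nil) (by simp [hab.ne])
  | cons hcu M' =>
    -- `M'.snd` is the only neighbour of `u` that can have further neighbours: any other one
    -- would extend the longest path `M`
    have hM' := hM.of_cons
    refine ⟨_, M'.snd, c, hcu.symm, fun h => ((Walk.cons_isPath_iff _ _).1 hM).2
      (h ▸ M'.getVert_mem_support 1), fun w huw hwt r hwr => by_contra fun hru => ?_⟩
    have hQ : (Walk.cons huw.symm M').IsPath :=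
      (Walk.cons_isPath_iff _ _).2 ⟨hM', fun hw => hwt (hG.eq_snd_of_adj_start hM' huw hw)⟩
    have hR : (Walk.cons hwr.symm (Walk.cons huw.symm M')).IsPath :=
      (Walk.cons_isPath_iff _ _).2
        ⟨hQ, fun hr => hru (by simpa using hG.eq_snd_of_adj_start hQ hwr hr)⟩
    simpa using hmax _ _ _ hR

variable (G)

def changingEdges (g : V → Bool) : Set (Sym2 V) :=
  {e ∈ G.edgeSet | ¬ (e.map g).IsDiag}

def IsPinned (A B : Set V) (g : V → Bool) : Prop :=
  (∀ a ∈ A, g a = false) ∧ ∀ b ∈ B, g b = true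

noncomputable def minChanges (A B : Set V) : ℕ :=
  sInf {n | ∃ g, IsPinned A B g ∧ (G.changingEdges g).ncard = n}

structure ABWalk (A B : Set V) where
  {first last : V}
  walk : G.Walk first last
  first_mem : first ∈ A
  last_mem : last ∈ B

-- Walks rather than paths, with no condition on interior vertices, are easy to transport along
-- the reductions; `ABWalk.exists_abPath_edges_subset` recovers `ABPath`s at the end.
def EdgeLinked (A B : Set V) (m : ℕ) : Prop :=
  ∃ L : List (G.ABWalk A B),
    L.Pairwise (fun P Q => P.walk.edges.Disjoint Q.walk.edges) ∧ m ≤ L.length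

def EdgeMenger (A B : Set V) : Prop :=
  G.EdgeLinked A B (G.minChanges A B)

variable {G} {A B A' B' : Set V} {g : V → Bool}

@[simp]
lemma mk_mem_changingEdges {p q : V} : s(p, q) ∈ G.changingEdges g ↔ G.Adj p q ∧ g p ≠ g q := by
  simp [changingEdges]

lemma changingEdges_subset_edgeSet : G.changingEdges g ⊆ G.edgeSet := fun _ he => he.1

lemma changingEdges_update_of_isolated [DecidableEq V] {x : V} (hx : ∀ r, ¬ G.Adj x r)
    (b : Bool) :
    G.changingEdges (Function.update g x b) = G.changingEdges g := by
  ext e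
  induction e with
  | _ p q =>
    simp only [mk_mem_changingEdges, and_congr_right_iff]
    intro hpq
    rw [Function.update_of_ne (by rintro rfl; exact hx q hpq),
      Function.update_of_ne (by rintro rfl; exact hx p hpq.symm)]

lemma changingEdges_not (g : V → Bool) : G.changingEdges (fun v => !g v) = G.changingEdges g := by
  ext e
  induction e with
  | _ p q => simp

lemma IsPinned.not (hg : IsPinned A B g) : IsPinned B A (fun v => !g v) :=
  ⟨fun b hb => by simp [hg.2 b hb], fun a ha => by simp [hg.1 a ha]⟩

lemma exists_isPinned (hAB : Disjoint A B) : ∃ g, IsPinned A B g := by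
  classical
  exact ⟨fun v => decide (v ∈ B), fun a ha => by simpa using hAB.notMem_of_mem_left ha,
    fun b hb => by simpa using hb⟩

lemma minChanges_le (hg : IsPinned A B g) : G.minChanges A B ≤ (G.changingEdges g).ncard :=
  Nat.sInf_le ⟨g, hg, rfl⟩

lemma exists_minChanges (hAB : Disjoint A B) :
    ∃ g, IsPinned A B g ∧ (G.changingEdges g).ncard = G.minChanges A B := by
  obtain ⟨g, hg⟩ := exists_isPinned hAB
  exact Nat.sInf_mem (s := {n | ∃ g, IsPinned A B g ∧ (G.changingEdges g).ncard = n})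
    ⟨_, g, hg, rfl⟩

lemma minChanges_comm (A B : Set V) : G.minChanges A B = G.minChanges B A := by
  have key : ∀ {A B : Set V} {n : ℕ}, (∃ g, IsPinned A B g ∧ (G.changingEdges g).ncard = n) →
      ∃ g, IsPinned B A g ∧ (G.changingEdges g).ncard = n := fun ⟨g, hg, hn⟩ =>
    ⟨_, hg.not, by rw [changingEdges_not, hn]⟩
  exact congrArg sInf (Set.ext fun n => ⟨key, key⟩)

lemma minChanges_le_minChanges_deleteEdges_add [Finite V] {S : Set (Sym2 V)} {c : ℕ}
    (hAB' : Disjoint A' B')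
    (h : ∀ g', IsPinned A' B' g' → ∃ g, IsPinned A B g ∧
      (G.deleteEdges S).changingEdges g = (G.deleteEdges S).changingEdges g' ∧
      (S ∩ G.changingEdges g).ncard ≤ c) :
    G.minChanges A B ≤ (G.deleteEdges S).minChanges A' B' + c := by
  obtain ⟨g', hg', hmin⟩ := (G.deleteEdges S).exists_minChanges hAB'
  obtain ⟨g, hg, hdel, hS⟩ := h g' hg'
  have hsplit : G.changingEdges g ⊆ (G.deleteEdges S).changingEdges g ∪ (S ∩ G.changingEdges g) :=
    fun e he => by
      by_cases heS : e ∈ S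
      · exact Or.inr ⟨heS, he⟩
      · exact Or.inl ⟨by rw [edgeSet_deleteEdges]; exact ⟨he.1, heS⟩, he.2⟩
  calc G.minChanges A B ≤ (G.changingEdges g).ncard := minChanges_le hg
    _ ≤ ((G.deleteEdges S).changingEdges g).ncard + (S ∩ G.changingEdges g).ncard :=
      (Set.ncard_le_ncard hsplit (Set.toFinite _)).trans (Set.ncard_union_le _ _)
    _ ≤ (G.deleteEdges S).minChanges A' B' + c := by rw [hdel, hmin]; omega

namespace ABWalk

variable {G' : SimpleGraph V}

def reverse (P : G.ABWalk A B) : G.ABWalk B A :=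
  ⟨P.walk.reverse, P.last_mem, P.first_mem⟩

def mapLe (h : G ≤ G') (P : G.ABWalk A B) : G'.ABWalk A B :=
  ⟨P.walk.mapLe h, P.first_mem, P.last_mem⟩

@[simp]
lemma edges_reverse (P : G.ABWalk A B) : P.reverse.walk.edges = P.walk.edges.reverse :=
  P.walk.edges_reverse

@[simp]
lemma edges_mapLe (h : G ≤ G') (P : G.ABWalk A B) : (P.mapLe h).walk.edges = P.walk.edges :=
  P.walk.edges_mapLe_eq_edges h

lemma exists_mem_changingEdges (P : G.ABWalk A B) (hg : IsPinned A B g) :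
    ∃ e ∈ P.walk.edges, e ∈ G.changingEdges g := by
  obtain ⟨⟨⟨p, q⟩, hpq⟩, hd, hp, hq⟩ := P.walk.exists_boundary_dart {v | g v = false}
    (hg.1 _ P.first_mem) (by simp [hg.2 _ P.last_mem])
  refine ⟨s(p, q), List.mem_map_of_mem hd, mk_mem_changingEdges.2 ⟨hpq, ?_⟩⟩
  simp_all

lemma exists_abPath_edges_subset (P : G.ABWalk A B) :
    ∃ Q : ABPath G A B, Q.walk.edges ⊆ P.walk.edges := by
  classical
  -- a shortest walk from `A` to `B` inside `P` is a path with no interior vertex in `A ∪ B`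
  suffices ∀ n {a b : V} (p : G.Walk a b), p.length = n → a ∈ A → b ∈ B →
      ∃ Q : ABPath G A B, Q.walk.edges ⊆ p.edges from this _ P.walk rfl P.first_mem P.last_mem
  intro n
  induction n using Nat.strong_induction_on with
  | _ n ih =>
  rintro a b p rfl ha hb
  by_cases hp : p.IsPath
  swap
  · have hlt : p.bypass.length < p.length := p.length_bypass_le_length.lt_of_ne fun h =>
      hp (p.bypass_eq_self_of_length_le_length_bypass h.ge ▸ p.bypass_isPath)
    obtain ⟨Q, hQ⟩ := ih _ hlt p.bypass rfl ha hb
    exact ⟨Q, List.Subset.trans hQ p.edges_bypass_subset_edges⟩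
  by_cases hint : ∃ v ∈ p.support.tail.dropLast, v ∈ A ∨ v ∈ B
  · obtain ⟨v, hv, hvAB⟩ := hint
    have hvs : v ∈ p.support := p.support.tail_subset (List.dropLast_subset _ hv)
    have hva : v ≠ a := by
      rintro rfl
      have := hp.support_nodup
      rw [← p.cons_tail_support, List.nodup_cons] at this
      exact this.1 (List.dropLast_subset _ hv)
    have hvb : v ≠ b := by
      rintro rfl
      have := hp.support_nodup
      rw [← p.dropLast_support_concat, List.nodup_append] at this
      rw [← List.tail_dropLast] at hv
      exact this.2.2 v (List.tail_subset _ hv) v (List.mem_singleton_self v) rfl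
    rcases hvAB with hvA | hvB
    · obtain ⟨Q, hQ⟩ := ih _ (Walk.length_dropUntil_lt_length hvs hva) _ rfl hvA hb
      exact ⟨Q, List.Subset.trans hQ (p.edges_dropUntil_subset_edges hvs)⟩
    · obtain ⟨Q, hQ⟩ := ih _ (Walk.length_takeUntil_lt_length hvs hvb) _ rfl ha hvB
      exact ⟨Q, List.Subset.trans hQ (p.edges_takeUntil_subset_edges hvs)⟩
  · push Not at hint
    exact ⟨⟨a, b, p, hp, ha, hb, hint⟩, List.Subset.refl _⟩

end ABWalk

namespace EdgeLinked

variable {G' : SimpleGraph V} {m k : ℕ}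

lemma zero : G.EdgeLinked A B 0 :=
  ⟨[], List.Pairwise.nil, le_rfl⟩

lemma mono (h : G.EdgeLinked A B m) (hk : k ≤ m) : G.EdgeLinked A B k :=
  let ⟨L, hL, hm⟩ := h
  ⟨L, hL, hk.trans hm⟩

lemma symm (h : G.EdgeLinked A B m) : G.EdgeLinked B A m := by
  obtain ⟨L, hL, hm⟩ := h
  refine ⟨L.map ABWalk.reverse, List.pairwise_map.2 (hL.imp fun hPQ => ?_), by simpa using hm⟩
  simpa [List.disjoint_reverse_left, List.disjoint_reverse_right] using hPQ

lemma mapLe (h : G.EdgeLinked A B m) (hG : G ≤ G') : G'.EdgeLinked A B m := by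
  obtain ⟨L, hL, hm⟩ := h
  exact ⟨L.map (ABWalk.mapLe hG),
    List.pairwise_map.2 (hL.imp fun hPQ => by simpa using hPQ), by simpa using hm⟩

lemma cons (h : G.EdgeLinked A B m) (hG : G ≤ G') (N : G'.ABWalk A B)
    (hN : ∀ e ∈ N.walk.edges, e ∉ G.edgeSet) : G'.EdgeLinked A B (m + 1) := by
  obtain ⟨L, hL, hm⟩ := h
  refine ⟨N :: L.map (ABWalk.mapLe hG), List.pairwise_cons.2 ⟨?_,
    List.pairwise_map.2 (hL.imp fun hPQ => by simpa using hPQ)⟩, by simpa using hm⟩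
  rintro _ hP e heN heP
  obtain ⟨P, -, rfl⟩ := List.mem_map.1 hP
  rw [ABWalk.edges_mapLe] at heP
  exact hN e heN (P.walk.edges_subset_edgeSet heP)

lemma of_insert {u x t : V} (h : G.EdgeLinked (insert u A) B m) (hG : G ≤ G')
    (hxu : G'.Adj x u) (hx : x ∈ A) (hu : u ∉ B) (hxu' : ¬ G.Adj x u)
    (ht : ∀ w, G.Adj u w → w = t) : G'.EdgeLinked A B m := by
  classical
  let f : G.ABWalk (insert u A) B → G'.ABWalk A B := fun P =>
    if hP : P.first = u then ⟨Walk.cons (by rw [hP]; exact hxu) (P.walk.mapLe hG), hx, P.last_mem⟩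
    else ⟨P.walk.mapLe hG, (Set.mem_insert_iff.1 P.first_mem).resolve_left hP, P.last_mem⟩
  have hf : ∀ P e, e ∈ (f P).walk.edges → e = s(x, u) ∧ P.first = u ∨ e ∈ P.walk.edges := by
    rintro @⟨a, b, p, ha, hb⟩ e he
    by_cases hP : a = u
    · subst hP
      dsimp only [f] at he
      rw [dif_pos rfl] at he
      simpa using he
    · dsimp only [f] at he
      rw [dif_neg hP] at he
      exact Or.inr (by simpa using he)
  have hstart : ∀ P : G.ABWalk (insert u A) B, P.first = u → s(u, t) ∈ P.walk.edges := by
    rintro @⟨a, b, p, ha, hb⟩ (rfl : a = u)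
    obtain ⟨w, hw, p', rfl⟩ := Walk.exists_eq_cons_of_ne (by rintro rfl; exact hu hb) p
    simp [ht w hw]
  -- since `t` is the only neighbour of `u`, at most one walk starts at `u`, and only that one
  -- is extended by the edge `s(x, u)`
  have hfresh : ∀ P : G.ABWalk (insert u A) B, s(x, u) ∉ P.walk.edges := fun P h =>
    hxu' (P.walk.edges_subset_edgeSet h)
  obtain ⟨L, hL, hm⟩ := h
  refine ⟨L.map f, List.pairwise_map.2 (hL.imp fun {P Q} hPQ e heP heQ => ?_), by simpa using hm⟩
  rcases hf P e heP with ⟨rfl, hP⟩ | hP <;> rcases hf Q _ heQ with ⟨he, hQ⟩ | hQ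
  · exact hPQ (hstart P hP) (hstart Q hQ)
  · exact hfresh Q hQ
  · exact hfresh P (he ▸ hP)
  · exact hPQ hP hQ

lemma le_ncard_changingEdges [Finite V] (h : G.EdgeLinked A B m) (hg : IsPinned A B g) :
    m ≤ (G.changingEdges g).ncard := by
  classical
  obtain ⟨L, hL, hm⟩ := h
  choose e he hch using fun P : G.ABWalk A B => P.exists_mem_changingEdges hg
  have hnd : (L.map e).Nodup := by
    refine List.pairwise_map.2 (hL.imp ?_)
    intro P Q hPQ hPQe
    exact hPQ (he P) (hPQe ▸ he Q)
  calc m ≤ (L.map e).toFinset.card := by rwa [List.toFinset_card_of_nodup hnd, List.length_map]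
    _ = ((L.map e).toFinset : Set (Sym2 V)).ncard := (Set.ncard_coe_finset _).symm
    _ ≤ (G.changingEdges g).ncard := Set.ncard_le_ncard (fun _ hx => by
        obtain ⟨P, -, rfl⟩ := List.mem_map.1 (List.mem_toFinset.1 hx)
        exact hch P) (Set.toFinite _)

lemma le_minChanges [Finite V] (h : G.EdgeLinked A B m) (hAB : Disjoint A B) :
    m ≤ G.minChanges A B := by
  obtain ⟨g, hg, hmin⟩ := G.exists_minChanges hAB
  exact hmin ▸ h.le_ncard_changingEdges hg

lemma of_abPath (P : Fin m → ABPath G A B)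
    (hP : ∀ i j, i ≠ j → (P i).walk.edges.Disjoint (P j).walk.edges) : G.EdgeLinked A B m :=
  ⟨List.ofFn fun i => ⟨(P i).walk, (P i).first_mem, (P i).last_mem⟩,
    List.pairwise_ofFn.2 fun i j hij => hP i j hij.ne, by simp⟩

lemma exists_abPath (h : G.EdgeLinked A B m) : ∃ P : Fin m → ABPath G A B,
    ∀ i j, i ≠ j → (P i).walk.edges.Disjoint (P j).walk.edges := by
  obtain ⟨L, hL, hm⟩ := h
  choose Q hQ using fun P : G.ABWalk A B => P.exists_abPath_edges_subset
  have hdisj : Pairwise fun i j : Fin L.length => (L.get i).walk.edges.Disjoint (L.get j).walk.edges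
  | i, j, hij => by
    rcases lt_or_gt_of_ne hij with h | h
    · exact List.pairwise_iff_get.1 hL i j h
    · exact (List.pairwise_iff_get.1 hL j i h).symm
  refine ⟨fun i => Q (L.get (Fin.castLE hm i)), fun i j hij e hei hej => ?_⟩
  exact hdisj (fun h => hij (Fin.castLE_injective hm h)) (hQ _ hei) (hQ _ hej)

end EdgeLinked

namespace EdgeMenger

lemma symm (h : G.EdgeMenger A B) : G.EdgeMenger B A := by
  rw [EdgeMenger, minChanges_comm]
  exact EdgeLinked.symm h

variable [Finite V]

lemma of_deleteEdges_inside (hAB : Disjoint A B) {p q : V}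
    (hpq : p ∈ A ∧ q ∈ A ∨ p ∈ B ∧ q ∈ B) (h : (G.deleteEdges {s(p, q)}).EdgeMenger A B) :
    G.EdgeMenger A B := by
  refine (h.mapLe (G.deleteEdges_le _)).mono
    (minChanges_le_minChanges_deleteEdges_add (c := 0) hAB fun g hg => ⟨g, hg, rfl, ?_⟩)
  rw [Nat.le_zero, Set.ncard_eq_zero, Set.eq_empty_iff_forall_notMem]
  rintro _ ⟨rfl, he⟩
  rcases hpq with ⟨hp, hq⟩ | ⟨hp, hq⟩
  · simp [hg.1 p hp, hg.1 q hq] at he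
  · simp [hg.2 p hp, hg.2 q hq] at he

lemma of_deleteEdges_across (hAB : Disjoint A B) {p q : V} (hpq : G.Adj p q) (hp : p ∈ A)
    (hq : q ∈ B) (h : (G.deleteEdges {s(p, q)}).EdgeMenger A B) : G.EdgeMenger A B :=
  (h.cons (G.deleteEdges_le _) ⟨Walk.cons hpq .nil, hp, hq⟩ (by simp)).mono
    (minChanges_le_minChanges_deleteEdges_add hAB fun g hg => ⟨g, hg, rfl,
      (Set.ncard_le_ncard Set.inter_subset_left).trans (Set.ncard_singleton _).le⟩)

lemma of_deleteEdges_pendant (hAB : Disjoint A B) {x u : V} (hx : ∀ r, G.Adj x r → r = u)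
    (hxA : x ∉ A) (hxB : x ∉ B) (h : (G.deleteEdges {s(x, u)}).EdgeMenger A B) :
    G.EdgeMenger A B := by
  classical
  have hiso : ∀ r, ¬ (G.deleteEdges {s(x, u)}).Adj x r := fun r hr =>
    (deleteEdges_adj.1 hr).2 (hx r (deleteEdges_adj.1 hr).1 ▸ rfl)
  refine (h.mapLe (G.deleteEdges_le _)).mono
    (minChanges_le_minChanges_deleteEdges_add (c := 0) hAB fun g hg =>
      ⟨Function.update g x (g u), ⟨fun a ha => ?_, fun b hb => ?_⟩,
        changingEdges_update_of_isolated hiso _, ?_⟩)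
  · rw [Function.update_of_ne (by rintro rfl; exact hxA ha)]
    exact hg.1 a ha
  · rw [Function.update_of_ne (by rintro rfl; exact hxB hb)]
    exact hg.2 b hb
  · rw [Nat.le_zero, Set.ncard_eq_zero, Set.eq_empty_iff_forall_notMem]
    rintro _ ⟨rfl, he⟩
    by_cases hux : u = x
    · subst hux
      simp at he
    · simp [Function.update_of_ne hux] at he

lemma of_deleteEdges_twoPath (hAB : Disjoint A B) {x u y : V} (hxu : G.Adj x u)
    (huy : G.Adj u y) (hx : x ∈ A) (hy : y ∈ B)
    (h : (G.deleteEdges {s(x, u), s(u, y)}).EdgeMenger A B) : G.EdgeMenger A B := by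
  refine (h.cons (G.deleteEdges_le _) ⟨Walk.cons hxu (Walk.cons huy .nil), hx, hy⟩
    (by simp)).mono (minChanges_le_minChanges_deleteEdges_add hAB fun g hg => ⟨g, hg, rfl, ?_⟩)
  -- `g x ≠ g y`, so only one of the two edges can change
  refine (Set.ncard_le_one (Set.toFinite _)).2 ?_
  rintro _ ⟨rfl | rfl, he⟩ _ ⟨rfl | rfl, he'⟩ <;> try rfl
  all_goals
    simp only [mk_mem_changingEdges, hg.1 x hx, hg.2 y hy] at he he'
    cases g u <;> simp_all

lemma of_deleteEdges_insert (hAB : Disjoint A B) {x u t : V} (hxu : G.Adj x u) (hxt : x ≠ t)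
    (hx : x ∈ A) (hu : u ∉ B) (hA : ∀ w, G.Adj u w → w ≠ t → w ∈ A)
    (h : (G.deleteEdges ((fun w => s(u, w)) '' {t}ᶜ)).EdgeMenger (insert u A) B) :
    G.EdgeMenger A B := by
  refine (h.of_insert (t := t) (G.deleteEdges_le _) hxu hx hu ?_ ?_).mono
    (minChanges_le_minChanges_deleteEdges_add (c := 0) (Set.disjoint_insert_left.2 ⟨hu, hAB⟩)
      fun g hg => ⟨g, ⟨fun a ha => hg.1 a (Set.mem_insert_of_mem _ ha), hg.2⟩, rfl, ?_⟩)
  · exact fun hxu' => (deleteEdges_adj.1 hxu').2 ⟨x, hxt, Sym2.eq_swap⟩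
  · exact fun w hw => by_contra fun hwt => (deleteEdges_adj.1 hw).2 ⟨w, hwt, rfl⟩
  · rw [Nat.le_zero, Set.ncard_eq_zero, Set.eq_empty_iff_forall_notMem]
    rintro _ ⟨⟨w, hwt, rfl⟩, he⟩
    rw [mk_mem_changingEdges] at he
    exact he.2 ((hg.1 u (Set.mem_insert u A)).trans (hg.1 w (Set.mem_insert_of_mem u
      (hA w he.1 hwt))).symm)

end EdgeMenger

lemma EdgeMenger.of_forall_deleteEdges_of_star [Finite V] (hAB : Disjoint A B) {u t x : V}
    (hux : G.Adj u x) (hxt : x ≠ t) (hu : u ∉ A ∧ u ∉ B)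
    (hpinned : ∀ w, G.Adj u w → w ≠ t → w ∈ A ∨ w ∈ B)
    (ih : ∀ S A' B', (G.edgeSet ∩ S).Nonempty → Disjoint A' B' →
      (G.deleteEdges S).EdgeMenger A' B') : G.EdgeMenger A B := by
  by_cases hcross : ∃ a b, G.Adj u a ∧ G.Adj u b ∧ a ∈ A ∧ b ∈ B
  · obtain ⟨a, b, ha, hb, haA, hbB⟩ := hcross
    exact .of_deleteEdges_twoPath hAB ha.symm hb haA hbB
      (ih _ _ _ ⟨s(a, u), ha.symm, by simp⟩ hAB)
  push Not at hcross
  have hS : (G.edgeSet ∩ (fun w => s(u, w)) '' {t}ᶜ).Nonempty := ⟨_, hux, x, hxt, rfl⟩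
  rcases hpinned x hux hxt with hxA | hxB
  · exact .of_deleteEdges_insert hAB hux.symm hxt hxA hu.2
      (fun w huw hwt => (hpinned w huw hwt).resolve_right (hcross x w hux huw hxA))
      (ih _ _ _ hS (Set.disjoint_insert_left.2 ⟨hu.2, hAB⟩))
  · exact (EdgeMenger.of_deleteEdges_insert hAB.symm hux.symm hxt hxB hu.1
      (fun w huw hwt => (hpinned w huw hwt).resolve_left fun hwA => hcross w x huw hux hwA hxB)
      (ih _ _ _ hS (Set.disjoint_insert_left.2 ⟨hu.1, hAB.symm⟩))).symm

lemma IsAcyclic.edgeMenger_of_forall_deleteEdges [Finite V] (hG : G.IsAcyclic)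
    (hAB : Disjoint A B) (ih : ∀ S A' B', (G.edgeSet ∩ S).Nonempty → Disjoint A' B' →
      (G.deleteEdges S).EdgeMenger A' B') : G.EdgeMenger A B := by
  have ih₁ : ∀ {p q}, G.Adj p q → (G.deleteEdges {s(p, q)}).EdgeMenger A B := fun hpq =>
    ih _ _ _ ⟨_, hpq, rfl⟩ hAB
  rcases G.edgeSet.eq_empty_or_nonempty with hE | ⟨e, he⟩
  · obtain ⟨g, hg⟩ := exists_isPinned hAB
    refine EdgeLinked.zero.mono ((minChanges_le hg).trans_eq ?_)
    rw [Set.ncard_eq_zero, ← Set.subset_empty_iff, ← hE]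
    exact changingEdges_subset_edgeSet
  obtain ⟨a, b, hab⟩ : ∃ a b, G.Adj a b := by
    induction e with | _ a b => exact ⟨a, b, he⟩
  by_cases hpin : ∃ p q, G.Adj p q ∧ (p ∈ A ∨ p ∈ B) ∧ (q ∈ A ∨ q ∈ B)
  · obtain ⟨p, q, hpq, hp | hp, hq | hq⟩ := hpin
    · exact .of_deleteEdges_inside hAB (.inl ⟨hp, hq⟩) (ih₁ hpq)
    · exact .of_deleteEdges_across hAB hpq hp hq (ih₁ hpq)
    · exact .of_deleteEdges_across hAB hpq.symm hq hp (ih₁ hpq.symm)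
    · exact .of_deleteEdges_inside hAB (.inr ⟨hp, hq⟩) (ih₁ hpq)
  by_cases hfree : ∃ x u, G.Adj x u ∧ (∀ r, G.Adj x r → r = u) ∧ x ∉ A ∧ x ∉ B
  · obtain ⟨x, u, hxu, hx, hxA, hxB⟩ := hfree
    exact .of_deleteEdges_pendant hAB hx hxA hxB (ih₁ hxu)
  push Not at hpin hfree
  -- now every leaf lies in `A ∪ B`, so the leaves around `u` are pinned and `u` itself is not
  obtain ⟨u, t, x, hux, hxt, hleaf⟩ := hG.exists_pendant_star hab
  have hpinned : ∀ w, G.Adj u w → w ≠ t → w ∈ A ∨ w ∈ B := fun w huw hwt =>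
    or_iff_not_imp_left.2 (hfree w u huw.symm (hleaf w huw hwt))
  have hu : u ∉ A ∧ u ∉ B := by
    have := hpin u x hux
    have := hpinned x hux hxt
    tauto
  exact .of_forall_deleteEdges_of_star hAB hux hxt hu hpinned ih

theorem IsAcyclic.edgeMenger [Finite V] (hG : G.IsAcyclic) (hAB : Disjoint A B) :
    G.EdgeMenger A B := by
  induction hn : G.edgeSet.ncard using Nat.strong_induction_on generalizing G A B with
  | _ n ih =>
  refine hG.edgeMenger_of_forall_deleteEdges hAB fun S A' B' hS hAB' =>
    ih _ ?_ (hG.anti (G.deleteEdges_le S)) hAB' rfl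
  rw [← hn, edgeSet_deleteEdges]
  exact Set.ncard_lt_ncard (Set.sdiff_ssubset_left_iff.2 hS) (Set.toFinite _)

end SimpleGraph

lemma PhyloTree.parsimony_eq_minChanges {X : Type*} (T : PhyloTree X) (f : X → Bool) :
    T.parsimony f = T.G.minChanges (T.leaf '' {x | f x = false}) (T.leaf '' {x | f x = true}) := by
  have hpin : ∀ g : T.V → Bool, (∀ x, g (T.leaf x) = f x) ↔
      IsPinned (T.leaf '' {x | f x = false}) (T.leaf '' {x | f x = true}) g := fun g => by
    simp only [IsPinned, Set.forall_mem_image, Set.mem_ofPred_eq]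
    refine ⟨fun h => ⟨fun x hx => (h x).trans hx, fun x hx => (h x).trans hx⟩,
      fun ⟨hA, hB⟩ x => ?_⟩
    cases hfx : f x
    exacts [hA hfx, hB hfx]
  simp only [PhyloTree.parsimony, minChanges, PhyloTree.changingNumber, changingEdges, hpin]

theorem stmt_13_general {X : Type*} (T : PhyloTree X) (f : X → Bool) :
    IsGreatest
      {m : ℕ | ∃ P : Fin m →
          ABPath T.G (T.leaf '' {x | f x = false}) (T.leaf '' {x | f x = true}),
        ∀ i j, i ≠ j → (P i).walk.edges.Disjoint (P j).walk.edges}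
      (T.parsimony f) := by
  have := T.fintypeV
  have hAB : Disjoint (T.leaf '' {x | f x = false}) (T.leaf '' {x | f x = true}) := by
    rw [Set.disjoint_image_iff T.leaf_inj, Set.disjoint_left]
    intro x hx hx'
    simp_all
  rw [T.parsimony_eq_minChanges]
  exact ⟨(T.isTree.isAcyclic.edgeMenger hAB).exists_abPath,
    fun m ⟨P, hP⟩ => (EdgeLinked.of_abPath P hP).le_minChanges hAB⟩

/-- the parsimony score `l(f,T)` equals the maximum number of
edge-disjoint `A_f`-`B_f`-paths in `T`. -/
theorem stmt_13 {X : Type*} [Fintype X] (T : PhyloTree X) (f : X → Bool) :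
    IsGreatest
      {m : ℕ | ∃ P : Fin m →
          ABPath T.G (T.leaf '' {x | f x = false}) (T.leaf '' {x | f x = true}),
        ∀ i j, i ≠ j → (P i).walk.edges.Disjoint (P j).walk.edges}
      (T.parsimony f) :=
  stmt_13_general T f
end

section
/- Let k ∈ {1,2} and let T and T̃ be two binary phylogenetic X-trees. Then T ≅ T̃ if and only if A_k(T) = A_k(T̃). -/
/-!
A character has parsimony score one on `T` exactly when it is the indicator of a side of an
edge, so `A₁(T)` determines the splits of `T`. So does `A₂(T)`: by induction over subtrees, the
side of an internal vertex is the union of two smaller sides, so its indicator has score at most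
two on `T'`; the score is not zero, and it is not two because it is one on `T`.

Conversely the splits determine the tree. Since no vertex has degree two, two vertex sets cut off
by edges of `T` that meet share a leaf; hence an oriented edge is determined by its side, a vertex
by the sides of the subtrees hanging off it, and three pairwise disjoint sides covering `X`
surround a unique vertex. This matches the vertices of `T` and `T'`, and two vertices are adjacent
iff a side at one is the complement of a side at the other.
-/

open SimpleGraph

theorem SimpleGraph.Reachable.head_induction {V : Type*} {G : SimpleGraph V} {P : V → Prop}
    {a b : V} (h : G.Reachable a b) (hb : P b)
    (step : ∀ x y, G.Adj x y → G.Reachable y b → P y → P x) : P a :=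
  ((reachable_iff_reflTransGen a b).1 h).head_induction_on hb fun hxy hy ih =>
    step _ _ hxy ((reachable_iff_reflTransGen _ _).2 hy) ih

namespace PhyloTree

variable {X : Type*} (T : PhyloTree X)

instance : Fintype T.V := T.fintypeV

def half (u v : T.V) : Set T.V := {w | (T.G.deleteEdges {s(u, v)}).Reachable w u}

variable {T} {a b c d u v w x n : T.V}

theorem side_eq_preimage_half : T.side u v = T.leaf ⁻¹' T.half u v := rfl

theorem side_subset_side (h : T.half a b ⊆ T.half c d) : T.side a b ⊆ T.side c d :=
  Set.preimage_mono h

theorem mem_half_self : u ∈ T.half u v := Reachable.refl u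

theorem notMem_half (h : T.G.Adj u v) : v ∉ T.half u v := fun hv =>
  isBridge_iff.1 (isAcyclic_iff_forall_adj_isBridge.1 T.isTree.isAcyclic h) hv.symm

theorem mem_half_of_adj (hw : w ∈ T.half u v) (h : T.G.Adj w x) (he : s(w, x) ≠ s(u, v)) :
    x ∈ T.half u v :=
  (Adj.reachable (by simpa [deleteEdges_adj, h.symm, Sym2.eq_swap] using he)).trans hw

theorem edge_eq_of_mem_half_of_notMem (hw : w ∈ T.half u v) (hx : x ∉ T.half u v)
    (h : T.G.Adj w x) : s(w, x) = s(u, v) :=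
  by_contra fun he => hx (mem_half_of_adj hw h he)

theorem mem_half_or_mem_half (u v w : T.V) : w ∈ T.half u v ∨ w ∈ T.half v u := by
  refine (T.isTree.connected.preconnected w u).head_induction
    (P := fun w => w ∈ T.half u v ∨ w ∈ T.half v u) (Or.inl mem_half_self) fun w x h _ ih => ?_
  by_cases he : s(w, x) = s(u, v)
  · rcases Sym2.eq_iff.1 he with ⟨rfl, -⟩ | ⟨rfl, -⟩
    · exact Or.inl mem_half_self
    · exact Or.inr mem_half_self
  · refine ih.imp (fun hx => mem_half_of_adj hx h.symm ?_) (fun hx => mem_half_of_adj hx h.symm ?_)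
    · rwa [Sym2.eq_swap]
    · rwa [Sym2.eq_swap, Sym2.eq_swap (a := v)]

theorem isCompl_half (h : T.G.Adj u v) : IsCompl (T.half u v) (T.half v u) := by
  refine ⟨Set.disjoint_left.2 fun w hu hv => notMem_half h ?_, ?_⟩
  · have : (T.G.deleteEdges {s(u, v)}).Reachable w v := by rwa [Sym2.eq_swap]
    exact this.symm.trans hu
  · exact codisjoint_iff.2 (Set.eq_univ_of_forall fun w => mem_half_or_mem_half u v w)

theorem isCompl_side (h : T.G.Adj u v) : IsCompl (T.side u v) (T.side v u) :=
  (isCompl_half h).preimage T.leaf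

/-- The walk from `x` to `c` inside `T.half c d` never visits `b`. -/
theorem reachable_of_mem_half_of_notMem (hx : x ∈ T.half c d) (hb : b ∉ T.half c d) :
    (T.G.deleteEdges {s(a, b)}).Reachable x c := by
  refine hx.head_induction (P := fun x => (T.G.deleteEdges {s(a, b)}).Reachable x c)
    (Reachable.refl c) fun x y h hy ih => ?_
  have hxy : b ∉ s(x, y) := fun hb' => hb <| by
    rcases Sym2.mem_iff.1 hb' with rfl | rfl
    exacts [h.reachable.trans hy, hy]
  refine Adj.reachable ?_ |>.trans ih
  rw [deleteEdges_adj] at h ⊢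
  exact ⟨h.1, fun he => hxy (Set.mem_singleton_iff.1 he ▸ Sym2.mem_mk_right a b)⟩

theorem half_subset_half (hc : c ∈ T.half a b) (hb : b ∉ T.half c d) :
    T.half c d ⊆ T.half a b :=
  fun _ hx => (reachable_of_mem_half_of_notMem hx hb).trans hc

theorem half_subset_of_adj (hw : w ∈ T.half a b) (hn : T.G.Adj w n) (hb : b ∉ T.half n w) :
    T.half n w ⊆ T.half a b := by
  refine half_subset_half (mem_half_of_adj hw hn fun he => ?_) hb
  rcases Sym2.eq_iff.1 he with ⟨rfl, rfl⟩ | ⟨rfl, rfl⟩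
  · exact hb mem_half_self
  · exact notMem_half hn.symm hw

theorem notMem_half_of_adj (hn : T.G.Adj u n) (hv : T.G.Adj u v) (hnv : n ≠ v) :
    v ∉ T.half n u := fun h =>
  notMem_half hn.symm (mem_half_of_adj h hv.symm (by simp [hnv.symm, hv.ne.symm]))

theorem half_subset_half_of_adj (hn : T.G.Adj u n) (hv : T.G.Adj u v) (hnv : n ≠ v) :
    T.half n u ⊆ T.half u v :=
  half_subset_of_adj mem_half_self hn (notMem_half_of_adj hn hv hnv)

theorem disjoint_half_of_adj (hn : T.G.Adj u n) (hm : T.G.Adj u v) (hnv : n ≠ v) :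
    Disjoint (T.half n u) (T.half v u) :=
  (isCompl_half hm).disjoint.mono_left (half_subset_half_of_adj hn hm hnv)

theorem exists_adj_mem_half (hw : w ≠ u) : ∃ n, T.G.Adj u n ∧ w ∈ T.half n u := by
  refine (T.isTree.connected.preconnected w u).head_induction
    (P := fun w => w ≠ u → ∃ n, T.G.Adj u n ∧ w ∈ T.half n u) (fun h => absurd rfl h)
    (fun w x h _ ih hw => ?_) hw
  by_cases hx : x = u
  · subst hx
    exact ⟨w, h.symm, mem_half_self⟩
  obtain ⟨n, hn, hxn⟩ := ih hx
  by_cases he : s(x, w) = s(n, u)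
  · rcases Sym2.eq_iff.1 he with ⟨-, rfl⟩ | ⟨-, rfl⟩
    · exact absurd rfl hw
    · exact ⟨w, hn, mem_half_self⟩
  · exact ⟨n, hn, mem_half_of_adj hxn h.symm he⟩

theorem exists_adj (u : T.V) : ∃ v, T.G.Adj u v :=
  Set.nonempty_of_ncard_ne_zero (s := T.G.neighborSet u) (by rcases T.binary u with h | h <;> omega)

theorem eq_of_adj_leaf {z : X} (ha : T.G.Adj (T.leaf z) a) (hb : T.G.Adj (T.leaf z) b) :
    a = b :=
  (Set.ncard_le_one_iff (Set.toFinite _)).1 ((T.leaf_iff _).2 ⟨z, rfl⟩) ha hb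

theorem exists_neighborSet_eq (hu : ∀ z, T.leaf z ≠ u) (hv : T.G.Adj u v) :
    ∃ c d, c ≠ v ∧ d ≠ v ∧ c ≠ d ∧ T.G.neighborSet u = {v, c, d} := by
  have h3 : (T.G.neighborSet u).ncard = 3 :=
    (T.binary u).resolve_left fun h => (not_exists.2 hu) ((T.leaf_iff u).1 h.le)
  have hv' : v ∈ T.G.neighborSet u := hv
  obtain ⟨c, d, hcd, hN⟩ : ∃ c d, c ≠ d ∧ T.G.neighborSet u \ {v} = {c, d} :=
    Set.ncard_eq_two.1 (by rw [Set.ncard_sdiff_singleton_of_mem hv', h3])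
  have hc : c ∈ T.G.neighborSet u \ {v} := hN ▸ Set.mem_insert c {d}
  have hd : d ∈ T.G.neighborSet u \ {v} := hN ▸ Set.mem_insert_of_mem c rfl
  refine ⟨c, d, hc.2, hd.2, hcd, ?_⟩
  rw [← hN, Set.insert_sdiff_singleton, Set.insert_eq_of_mem hv']

theorem adj_of_neighborSet_eq (hN : T.G.neighborSet u = {a, b, c}) :
    T.G.Adj u a ∧ T.G.Adj u b ∧ T.G.Adj u c := by
  simp [← mem_neighborSet, hN]

theorem half_leaf {z : X} (h : T.G.Adj (T.leaf z) v) : T.half (T.leaf z) v = {T.leaf z} := by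
  refine Set.eq_singleton_iff_unique_mem.2 ⟨mem_half_self, fun w hw => by_contra fun hne => ?_⟩
  obtain ⟨n, hn, hwn⟩ := exists_adj_mem_half hne
  exact (isCompl_half h).disjoint.notMem_of_mem_left hw (eq_of_adj_leaf hn h ▸ hwn)

theorem side_leaf {z : X} (h : T.G.Adj (T.leaf z) v) : T.side (T.leaf z) v = {z} := by
  rw [side_eq_preimage_half, half_leaf h, ← Set.image_singleton,
    Set.preimage_image_eq _ T.leaf_inj]

theorem singleton_mem_splits (z : X) : {z} ∈ T.splits :=
  have ⟨v, hv⟩ := T.exists_adj (T.leaf z)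
  ⟨T.leaf z, v, hv, (side_leaf hv).symm⟩

theorem mem_side_of_neighborSet_eq {z : X} (hN : T.G.neighborSet u = {a, b, c})
    (hz : T.leaf z ≠ u) : z ∈ T.side a u ∨ z ∈ T.side b u ∨ z ∈ T.side c u := by
  obtain ⟨n, hn, hzn⟩ := exists_adj_mem_half hz
  have : n ∈ ({a, b, c} : Set T.V) := hN ▸ hn
  rcases this with rfl | rfl | rfl
  exacts [Or.inl hzn, Or.inr (Or.inl hzn), Or.inr (Or.inr hzn)]

theorem dart_induction {P : T.V → T.V → Prop}
    (leaf : ∀ z v, T.G.Adj (T.leaf z) v → P (T.leaf z) v)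
    (internal : ∀ u v c d, (∀ z, T.leaf z ≠ u) → c ≠ v → d ≠ v → c ≠ d →
      T.G.neighborSet u = {v, c, d} → P c u → P d u → P u v)
    (h : T.G.Adj u v) : P u v := by
  induction hk : (T.half u v).ncard using Nat.strong_induction_on generalizing u v with
  | _ k ih =>
  by_cases hu : ∃ z, T.leaf z = u
  · obtain ⟨z, rfl⟩ := hu
    exact leaf z v h
  obtain ⟨c, d, hcv, hdv, hcd, hN⟩ := exists_neighborSet_eq (not_exists.1 hu) h
  obtain ⟨-, hc, hd⟩ := adj_of_neighborSet_eq hN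
  have hlt : ∀ {n}, T.G.Adj u n → n ≠ v → (T.half n u).ncard < k := fun hun hnv => hk ▸
    Set.ncard_lt_ncard ((half_subset_half_of_adj hun h hnv).ssubset_of_not_subset
      fun hsub => notMem_half hun.symm (hsub mem_half_self))
  exact internal u v c d (not_exists.1 hu) hcv hdv hcd hN
    (ih _ (hlt hc hcv) hc.symm rfl) (ih _ (hlt hd hdv) hd.symm rfl)

theorem side_nonempty (h : T.G.Adj u v) : (T.side u v).Nonempty := by
  refine dart_induction (P := fun u v => (T.side u v).Nonempty)
    (fun z v _ => ⟨z, mem_half_self⟩) (fun u v c d _ hcv _ _ hN hc _ => ?_) h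
  obtain ⟨hv, hc', -⟩ := adj_of_neighborSet_eq hN
  exact hc.mono (side_subset_side (half_subset_half_of_adj hc' hv hcv))

theorem side_eq_union (hu : ∀ z, T.leaf z ≠ u) (hcv : c ≠ v) (hdv : d ≠ v)
    (hN : T.G.neighborSet u = {v, c, d}) : T.side u v = T.side c u ∪ T.side d u := by
  obtain ⟨hv, hc, hd⟩ := adj_of_neighborSet_eq hN
  refine subset_antisymm (fun z hz => ?_) (Set.union_subset ?_ ?_)
  · rcases mem_side_of_neighborSet_eq hN (hu z) with hz' | hz'
    · exact absurd hz' ((isCompl_side hv).disjoint.notMem_of_mem_left hz)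
    · exact hz'
  · exact side_subset_side (half_subset_half_of_adj hc hv hcv)
  · exact side_subset_side (half_subset_half_of_adj hd hv hdv)

theorem exists_adj_notMem_half (hN : T.G.neighborSet w = {a, b, c}) (hab : a ≠ b) (hac : a ≠ c)
    (hbc : b ≠ c) (p q : T.V) : ∃ n, T.G.Adj w n ∧ p ∉ T.half n w ∧ q ∉ T.half n w := by
  obtain ⟨ha, hb, hc⟩ := adj_of_neighborSet_eq hN
  have hab' := Set.disjoint_left.1 (disjoint_half_of_adj ha hb hab)
  have hac' := Set.disjoint_left.1 (disjoint_half_of_adj ha hc hac)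
  have hbc' := Set.disjoint_left.1 (disjoint_half_of_adj hb hc hbc)
  by_contra! H
  by_cases hpa : p ∈ T.half a w
  · exact hbc' (H b hb (hab' hpa)) (H c hc (hac' hpa))
  · have hpb : p ∈ T.half b w := by_contra fun hpb => hab' (H a ha hpa) (H b hb hpb)
    exact hbc' hpb (by_contra fun hpc => hac' (H a ha hpa) (H c hc hpc))

/-- This is where binarity enters: a vertex of degree three has a neighbour whose subtree avoids
any two given vertices. -/
theorem exists_side_inter_nonempty (hab : w ∈ T.half a b) (hcd : w ∈ T.half c d) :
    (T.side a b ∩ T.side c d).Nonempty := by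
  by_cases hw : ∃ z, T.leaf z = w
  · obtain ⟨z, rfl⟩ := hw
    exact ⟨z, hab, hcd⟩
  obtain ⟨v, hv⟩ := T.exists_adj w
  obtain ⟨e, f, hev, hfv, hef, hN⟩ := exists_neighborSet_eq (not_exists.1 hw) hv
  obtain ⟨n, hn, hb, hd⟩ := exists_adj_notMem_half hN hev.symm hfv.symm hef b d
  exact (side_nonempty hn.symm).mono (Set.subset_inter
    (side_subset_side (half_subset_of_adj hab hn hb))
    (side_subset_side (half_subset_of_adj hcd hn hd)))

theorem disjoint_half_of_disjoint_side (h : Disjoint (T.side a b) (T.side c d)) :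
    Disjoint (T.half a b) (T.half c d) :=
  Set.disjoint_left.2 fun _ hab hcd =>
    Set.not_nonempty_iff_eq_empty.2 (Set.disjoint_iff_inter_eq_empty.1 h)
      (exists_side_inter_nonempty hab hcd)

theorem half_subset_half_of_side_subset (h' : T.G.Adj c d) (h : T.side a b ⊆ T.side c d) :
    T.half a b ⊆ T.half c d := by
  rw [← (isCompl_half h').symm.compl_eq]
  refine (disjoint_half_of_disjoint_side ?_).subset_compl_right
  rw [← (isCompl_side h').symm.compl_eq] at h
  exact Set.subset_compl_iff_disjoint_right.1 h

/-- Equal sides give equal halves, and only one edge leaves a half. -/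
theorem eq_and_eq_of_side_eq (h : T.G.Adj u v) (h' : T.G.Adj a b)
    (hS : T.side u v = T.side a b) : u = a ∧ v = b := by
  have hH : T.half u v = T.half a b := subset_antisymm
    (half_subset_half_of_side_subset h' hS.le) (half_subset_half_of_side_subset h hS.ge)
  have hu : u ∈ T.half a b := hH ▸ mem_half_self
  rcases Sym2.eq_iff.1 (edge_eq_of_mem_half_of_notMem hu (hH ▸ notMem_half h) h) with hab | hab
  · exact hab
  · exact absurd (hab.1 ▸ hu) (notMem_half h')

theorem eq_of_mem_half_of_mem_half (hm : T.G.Adj u a) (hn : T.G.Adj u b) (ha : w ∈ T.half a u)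
    (hb : w ∈ T.half b u) : a = b :=
  by_contra fun hne => (disjoint_half_of_adj hm hn hne).notMem_of_mem_left ha hb

theorem disjoint_side_of_adj (ha : T.G.Adj u a) (hb : T.G.Adj u b) (hab : a ≠ b) :
    Disjoint (T.side a u) (T.side b u) :=
  (disjoint_half_of_adj ha hb hab).preimage T.leaf

theorem notMem_half_of_disjoint (hab : T.G.Adj a b) (hcd : T.G.Adj c d)
    (h : Disjoint (T.half a b) (T.half c d)) (hwa : w ∉ T.half a b) (hwc : w ∉ T.half c d) :
    d ∉ T.half a b := fun hd => by
  rcases Sym2.eq_iff.1 (edge_eq_of_mem_half_of_notMem hd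
    (h.notMem_of_mem_right mem_half_self) hcd.symm) with ⟨rfl, rfl⟩ | ⟨rfl, -⟩
  · exact (mem_half_or_mem_half c d w).elim hwc hwa
  · exact notMem_half hab hd

theorem exists_adj_half_subset (hw : w ∉ T.half a b) : ∃ n, T.G.Adj w n ∧ T.half a b ⊆ T.half n w :=
  have ⟨n, hn, han⟩ := exists_adj_mem_half fun h : a = w => hw (h ▸ mem_half_self)
  ⟨n, hn, half_subset_half han hw⟩

theorem eq_of_disjoint_side {a₁ b₁ a₂ b₂ a₃ b₃ : T.V} (h₁ : T.G.Adj a₁ b₁) (h₂ : T.G.Adj a₂ b₂)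
    (h₃ : T.G.Adj a₃ b₃) (d₁₂ : Disjoint (T.side a₁ b₁) (T.side a₂ b₂))
    (d₁₃ : Disjoint (T.side a₁ b₁) (T.side a₃ b₃)) (d₂₃ : Disjoint (T.side a₂ b₂) (T.side a₃ b₃))
    (hcov : ∀ z, z ∈ T.side a₁ b₁ ∨ z ∈ T.side a₂ b₂ ∨ z ∈ T.side a₃ b₃) : b₁ = b₂ := by
  have e₁₂ := disjoint_half_of_disjoint_side d₁₂
  have e₁₃ := disjoint_half_of_disjoint_side d₁₃
  have e₂₃ := disjoint_half_of_disjoint_side d₂₃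
  have hb₂ : b₁ ∉ T.half a₂ b₂ := notMem_half_of_disjoint h₂ h₁ e₁₂.symm
    (e₂₃.notMem_of_mem_right mem_half_self) (e₁₃.notMem_of_mem_right mem_half_self)
  have hb₃ : b₁ ∉ T.half a₃ b₃ := notMem_half_of_disjoint h₃ h₁ e₁₃.symm
    (e₂₃.notMem_of_mem_left mem_half_self) (e₁₂.notMem_of_mem_right mem_half_self)
  have hb₁ : ∀ z, T.leaf z ≠ b₁ := by
    rintro z rfl
    rcases hcov z with hz | hz | hz
    exacts [notMem_half h₁ hz, hb₂ hz, hb₃ hz]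
  obtain ⟨n₂, hn₂, hsub₂⟩ := exists_adj_half_subset hb₂
  obtain ⟨n₃, hn₃, hsub₃⟩ := exists_adj_half_subset hb₃
  have hn₂a : n₂ ≠ a₁ := fun he => e₁₂.notMem_of_mem_right mem_half_self (he ▸ hsub₂ mem_half_self)
  obtain ⟨c, d, hca, hda, hcd, hN⟩ := exists_neighborSet_eq hb₁ h₁.symm
  have hn₂₃ : n₂ ≠ n₃ := by
    obtain ⟨m, hm, hma, hmn⟩ : ∃ m, T.G.Adj b₁ m ∧ m ≠ a₁ ∧ m ≠ n₂ := by
      by_cases hc : c = n₂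
      · exact ⟨d, (adj_of_neighborSet_eq hN).2.2, hda, hc ▸ hcd.symm⟩
      · exact ⟨c, (adj_of_neighborSet_eq hN).2.1, hca, hc⟩
    obtain ⟨z, hz⟩ := side_nonempty hm.symm
    rcases hcov z with hz' | hz' | hz'
    · exact absurd (eq_of_mem_half_of_mem_half hm h₁.symm hz hz') hma
    · exact absurd (eq_of_mem_half_of_mem_half hm hn₂ hz (hsub₂ hz')) hmn
    · exact fun he => hmn (eq_of_mem_half_of_mem_half hm hn₂ hz (he ▸ hsub₃ hz'))
  have hS : T.side n₂ b₁ = T.side a₂ b₂ := by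
    refine subset_antisymm (fun z hz => ?_) (side_subset_side hsub₂)
    rcases hcov z with hz' | hz' | hz'
    · exact absurd (eq_of_mem_half_of_mem_half hn₂ h₁.symm hz hz') hn₂a
    · exact hz'
    · exact absurd (eq_of_mem_half_of_mem_half hn₂ hn₃ hz (hsub₃ hz')) hn₂₃
  exact (eq_and_eq_of_side_eq hn₂.symm h₂ hS).2

variable (T) in
def cells (u : T.V) : Set (Set X) := (fun n => T.side n u) '' T.G.neighborSet u

theorem cells_leaf (z : X) : T.cells (T.leaf z) = {{z}ᶜ} := by
  obtain ⟨v, hv⟩ := T.exists_adj (T.leaf z)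
  have hN : T.G.neighborSet (T.leaf z) = {v} :=
    Set.eq_singleton_iff_unique_mem.2 ⟨hv, fun _ hw => eq_of_adj_leaf hw hv⟩
  rw [cells, hN, Set.image_singleton, ← (isCompl_side hv).compl_eq, side_leaf hv]

theorem cells_eq_of_cover (h₁ : T.G.Adj u a) (h₂ : T.G.Adj u b) (h₃ : T.G.Adj u c)
    (hcov : ∀ z, z ∈ T.side a u ∨ z ∈ T.side b u ∨ z ∈ T.side c u) :
    T.cells u = {T.side a u, T.side b u, T.side c u} := by
  ext S
  constructor
  · rintro ⟨n, hn, rfl⟩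
    obtain ⟨z, hz⟩ := side_nonempty (Adj.symm hn)
    rcases hcov z with hz' | hz' | hz'
    · simp [eq_of_mem_half_of_mem_half hn h₁ hz hz']
    · simp [eq_of_mem_half_of_mem_half hn h₂ hz hz']
    · simp [eq_of_mem_half_of_mem_half hn h₃ hz hz']
  · rintro (rfl | rfl | rfl)
    exacts [⟨a, h₁, rfl⟩, ⟨b, h₂, rfl⟩, ⟨c, h₃, rfl⟩]

theorem cells_injective : Function.Injective T.cells := fun u u' h => by
  obtain ⟨n, hn⟩ := T.exists_adj u
  obtain ⟨m, hm, he⟩ : T.side n u ∈ T.cells u' := h ▸ ⟨n, hn, rfl⟩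
  exact (eq_and_eq_of_side_eq (Adj.symm hm) hn.symm he).2.symm

theorem adj_iff_exists_compl_mem_cells : T.G.Adj u v ↔ ∃ S ∈ T.cells u, Sᶜ ∈ T.cells v := by
  constructor
  · exact fun h => ⟨T.side v u, ⟨v, h, rfl⟩, u, h.symm, (isCompl_side h.symm).compl_eq.symm⟩
  · rintro ⟨_, ⟨n, hn, rfl⟩, m, hm, hmn⟩
    rw [(isCompl_side (Adj.symm hn)).compl_eq] at hmn
    exact (eq_and_eq_of_side_eq (Adj.symm hm) hn hmn).2 ▸ hn

theorem exists_cells_eq {T' : PhyloTree X} (hsp : T.splits ⊆ T'.splits) (u : T.V) :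
    ∃ u', T'.cells u' = T.cells u := by
  by_cases hu : ∃ z, T.leaf z = u
  · obtain ⟨z, rfl⟩ := hu
    exact ⟨T'.leaf z, by rw [cells_leaf, cells_leaf]⟩
  obtain ⟨v, hv⟩ := T.exists_adj u
  obtain ⟨c, d, hcv, hdv, hcd, hN⟩ := exists_neighborSet_eq (not_exists.1 hu) hv
  obtain ⟨-, hc, hd⟩ := adj_of_neighborSet_eq hN
  have hcov := fun z => mem_side_of_neighborSet_eq (z := z) hN (not_exists.1 hu z)
  obtain ⟨a₁, b₁, h₁, e₁⟩ := hsp ⟨v, u, hv.symm, rfl⟩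
  obtain ⟨a₂, b₂, h₂, e₂⟩ := hsp ⟨c, u, hc.symm, rfl⟩
  obtain ⟨a₃, b₃, h₃, e₃⟩ := hsp ⟨d, u, hd.symm, rfl⟩
  have d₁₂ : Disjoint (T'.side a₁ b₁) (T'.side a₂ b₂) :=
    e₁ ▸ e₂ ▸ disjoint_side_of_adj hv hc hcv.symm
  have d₁₃ : Disjoint (T'.side a₁ b₁) (T'.side a₃ b₃) :=
    e₁ ▸ e₃ ▸ disjoint_side_of_adj hv hd hdv.symm
  have d₂₃ : Disjoint (T'.side a₂ b₂) (T'.side a₃ b₃) := e₂ ▸ e₃ ▸ disjoint_side_of_adj hc hd hcd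
  have hcov' : ∀ z, z ∈ T'.side a₁ b₁ ∨ z ∈ T'.side a₂ b₂ ∨ z ∈ T'.side a₃ b₃ :=
    e₁ ▸ e₂ ▸ e₃ ▸ hcov
  obtain rfl := eq_of_disjoint_side h₁ h₂ h₃ d₁₂ d₁₃ d₂₃ hcov'
  obtain rfl := eq_of_disjoint_side h₁ h₃ h₂ d₁₃ d₁₂ d₂₃.symm fun z => (hcov' z).imp_right Or.symm
  refine ⟨b₁, ?_⟩
  rw [cells_eq_of_cover hv hc hd hcov, cells_eq_of_cover h₁.symm h₂.symm h₃.symm hcov', e₁, e₂, e₃]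

theorem isomorphic_of_splits_eq {T' : PhyloTree X} (h : T.splits = T'.splits) :
    T.Isomorphic T' := by
  have hrange : Set.range T.cells = Set.range T'.cells := subset_antisymm
    (by rintro _ ⟨u, rfl⟩; exact exists_cells_eq h.le u)
    (by rintro _ ⟨u, rfl⟩; exact exists_cells_eq h.ge u)
  let e : T.V ≃ T'.V := (Equiv.ofInjective _ T.cells_injective).trans
    ((Equiv.setCongr hrange).trans (Equiv.ofInjective _ T'.cells_injective).symm)
  have he : ∀ u, T'.cells (e u) = T.cells u := fun u =>
    Equiv.apply_ofInjective_symm T'.cells_injective _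
  refine ⟨⟨e, ?_⟩, fun z => T'.cells_injective ?_⟩
  · intro u v
    rw [adj_iff_exists_compl_mem_cells, adj_iff_exists_compl_mem_cells, he, he]
  · exact (he _).trans ((cells_leaf z).trans (cells_leaf z).symm)

variable (T) in
def changingEdges (g : T.V → Bool) : Set (Sym2 T.V) :=
  {e ∈ T.G.edgeSet | ¬ (Sym2.map g e).IsDiag}

variable {f : X → Bool} {g : T.V → Bool}

theorem changingNumber_eq_ncard : T.changingNumber g = (T.changingEdges g).ncard := rfl

theorem mk_mem_changingEdges : s(a, b) ∈ T.changingEdges g ↔ T.G.Adj a b ∧ g a ≠ g b := by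
  simp [changingEdges]

theorem changingNumber_comp_iso {T' : PhyloTree X} (φ : T.G ≃g T'.G) (g : T'.V → Bool) :
    T.changingNumber (g ∘ φ) = T'.changingNumber g := by
  rw [changingNumber, changingNumber, ← Set.ncard_preimage_of_injective_subset_range
    (Sym2.map.injective φ.injective) fun e _ => ⟨Sym2.map φ.symm e, by simp [Sym2.map_map]⟩]
  congr 1
  ext e
  simp [φ.map_mem_edgeSet_iff, Sym2.map_map]

theorem exists_changingNumber_eq_parsimony (f : X → Bool) :
    ∃ g : T.V → Bool, (∀ x, g (T.leaf x) = f x) ∧ T.changingNumber g = T.parsimony f := by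
  classical
  exact Nat.sInf_mem (s := {n | ∃ g : T.V → Bool, (∀ x, g (T.leaf x) = f x) ∧
    T.changingNumber g = n}) ⟨_, Function.extend T.leaf f fun _ => false,
      fun x => T.leaf_inj.extend_apply _ _ x, rfl⟩

theorem parsimony_le (hg : ∀ x, g (T.leaf x) = f x) : T.parsimony f ≤ T.changingNumber g :=
  Nat.sInf_le ⟨g, hg, rfl⟩

theorem parsimony_le_of_iso {T' : PhyloTree X} (φ : T.G ≃g T'.G)
    (hφ : ∀ x, φ (T.leaf x) = T'.leaf x) (f : X → Bool) : T'.parsimony f ≤ T.parsimony f := by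
  obtain ⟨g, hg, hgf⟩ := T.exists_changingNumber_eq_parsimony f
  calc T'.parsimony f ≤ T'.changingNumber (g ∘ φ.symm) :=
        parsimony_le fun x => by simp [← hφ x, hg x]
    _ = T.parsimony f := by
        rw [← changingNumber_comp_iso φ, ← hgf]
        congr 1
        ext v
        simp

theorem Ak_eq_of_isomorphic {T' : PhyloTree X} (h : T.Isomorphic T') (k : ℕ) :
    T.Ak k = T'.Ak k := by
  obtain ⟨φ, hφ⟩ := h
  have hφ' : ∀ x, φ.symm (T'.leaf x) = T.leaf x := fun x => φ.symm_apply_eq.2 (hφ x).symm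
  ext f
  exact iff_of_eq (congrArg (· = k)
    (le_antisymm (parsimony_le_of_iso φ.symm hφ' f) (parsimony_le_of_iso φ hφ f)))

theorem eq_of_reachable_deleteEdges {E : Set (Sym2 T.V)} (hE : T.changingEdges g ⊆ E)
    (h : (T.G.deleteEdges E).Reachable a b) : g a = g b :=
  h.head_induction (P := fun a => g a = g b) rfl fun x y hxy _ ih => by
    rw [deleteEdges_adj] at hxy
    have hgxy : g x = g y := by_contra fun hne => hxy.2 (hE (mk_mem_changingEdges.2 ⟨hxy.1, hne⟩))
    exact hgxy.trans ih

theorem parsimony_pos {x y : X} (hxy : f x ≠ f y) : 0 < T.parsimony f := by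
  obtain ⟨g, hg, hgf⟩ := T.exists_changingNumber_eq_parsimony f
  refine Nat.pos_of_ne_zero fun h0 => hxy ?_
  have hE : T.changingEdges g = ∅ := (Set.ncard_eq_zero (Set.toFinite _)).1 (hgf.trans h0)
  rw [← hg, ← hg]
  exact eq_of_reachable_deleteEdges hE.le (by simpa using T.isTree.connected.preconnected _ _)

theorem parsimony_pos_of_mem_splits {T' : PhyloTree X} (hf : {x | f x = true} ∈ T'.splits) :
    0 < T.parsimony f := by
  obtain ⟨u, v, huv, hS⟩ := hf
  obtain ⟨x, hx⟩ := side_nonempty huv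
  obtain ⟨y, hy⟩ := side_nonempty huv.symm
  refine parsimony_pos (x := x) (y := y) fun he => ?_
  have hx' : f x = true := (hS ▸ hx : x ∈ {x | f x = true})
  have hy' : y ∈ {x | f x = true} := (he ▸ hx' : f y = true)
  exact (isCompl_side huv).disjoint.notMem_of_mem_left (hS ▸ hy') hy

theorem parsimony_le_card (D : Finset (T.V × T.V))
    (hf : ∀ x, f x = true ↔ ∃ d ∈ D, x ∈ T.side d.1 d.2) : T.parsimony f ≤ D.card := by
  classical
  let g : T.V → Bool := fun w => decide (∃ d ∈ D, w ∈ T.half d.1 d.2)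
  have hE : ∀ a b, T.G.Adj a b → g a = true → g b = false →
      s(a, b) ∈ D.image fun d => s(d.1, d.2) := by
    intro a b hab ha hb
    obtain ⟨d, hd, had⟩ := of_decide_eq_true ha
    refine Finset.mem_image.2 ⟨d, hd, (edge_eq_of_mem_half_of_notMem had (fun hbd => ?_) hab).symm⟩
    exact Bool.false_ne_true (hb.symm.trans (decide_eq_true ⟨d, hd, hbd⟩))
  have hsub : T.changingEdges g ⊆ ↑(D.image fun d => s(d.1, d.2)) := by
    intro e he
    induction e using Sym2.ind with | h a b => ?_
    obtain ⟨hab, hne⟩ := mk_mem_changingEdges.1 he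
    cases ha : g a
    · rw [Sym2.eq_swap]
      exact hE b a hab.symm (by simpa [ha] using hne.symm) ha
    · exact hE a b hab ha (by simpa [ha] using hne.symm)
  calc T.parsimony f ≤ T.changingNumber g :=
        parsimony_le fun x => Bool.eq_iff_iff.2 (decide_eq_true_iff.trans (hf x).symm)
    _ ≤ (D.image fun d => s(d.1, d.2)).card := by
        rw [changingNumber_eq_ncard, ← Set.ncard_coe_finset]
        exact Set.ncard_le_ncard hsub (Finset.finite_toSet _)
    _ ≤ D.card := Finset.card_image_le

theorem setOf_eq_side_of_changingEdges_subset (hab : T.G.Adj a b)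
    (hE : T.changingEdges g ⊆ {s(a, b)}) (ha : g a = true) (hb : g b = false)
    (hg : ∀ x, g (T.leaf x) = f x) : {x | f x = true} = T.side a b := by
  ext x
  change f x = true ↔ T.leaf x ∈ T.half a b
  rw [← hg]
  rcases mem_half_or_mem_half a b (T.leaf x) with hx | hx
  · exact iff_of_true ((eq_of_reachable_deleteEdges hE hx).trans ha) hx
  · have hx' : g (T.leaf x) = g b := eq_of_reachable_deleteEdges (by rwa [Sym2.eq_swap]) hx
    exact iff_of_false (by simp [hx', hb]) ((isCompl_half hab).disjoint.notMem_of_mem_right hx)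

theorem mem_splits_of_parsimony_eq_one (hf : T.parsimony f = 1) :
    {x | f x = true} ∈ T.splits := by
  obtain ⟨g, hg, hgf⟩ := T.exists_changingNumber_eq_parsimony f
  obtain ⟨e, he⟩ : ∃ e, T.changingEdges g = {e} := Set.ncard_eq_one.1 (hgf.trans hf)
  induction e using Sym2.ind with | h a b => ?_
  obtain ⟨hab, hne⟩ := mk_mem_changingEdges.1 (he ▸ rfl : s(a, b) ∈ T.changingEdges g)
  cases ha : g a
  · refine ⟨b, a, hab.symm, setOf_eq_side_of_changingEdges_subset hab.symm ?_ ?_ ha hg⟩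
    · rw [he, Sym2.eq_swap]
    · simpa [ha] using hne.symm
  · exact ⟨a, b, hab, setOf_eq_side_of_changingEdges_subset hab he.le ha
      (by simpa [ha] using hne.symm) hg⟩

theorem mem_Ak_one_iff : f ∈ T.Ak 1 ↔ {x | f x = true} ∈ T.splits := by
  refine ⟨mem_splits_of_parsimony_eq_one, fun hS => ?_⟩
  have ⟨u, v, _, hS'⟩ := hS
  refine le_antisymm ?_ (parsimony_pos_of_mem_splits hS)
  exact parsimony_le_card {(u, v)} fun x => by simp [← hS']

theorem splits_eq_of_Ak_one_eq {T' : PhyloTree X} (h : T.Ak 1 = T'.Ak 1) :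
    T.splits = T'.splits := by
  classical
  ext S
  have hS : {x | decide (x ∈ S) = true} = S := by simp
  rw [← hS, ← mem_Ak_one_iff, ← mem_Ak_one_iff, h]

theorem splits_subset_of_Ak_two_eq {T' : PhyloTree X} (h : T.Ak 2 = T'.Ak 2) :
    T.splits ⊆ T'.splits := by
  classical
  rintro _ ⟨u, v, huv, rfl⟩
  refine dart_induction (P := fun u v => T.side u v ∈ T'.splits)
    (fun z v hv => side_leaf hv ▸ T'.singleton_mem_splits z)
    (fun u v c d hu hcv hdv hcd hN hc hd => ?_) huv
  obtain ⟨a, b, -, hc⟩ := hc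
  obtain ⟨a', b', -, hd⟩ := hd
  let f : X → Bool := fun x => decide (x ∈ T.side u v)
  have hf : {x | f x = true} = T.side u v := by simp [f]
  have hf_mem : {x | f x = true} ∈ T.splits :=
    hf ▸ ⟨u, v, (adj_of_neighborSet_eq hN).1, rfl⟩
  have h1 : T.parsimony f = 1 := mem_Ak_one_iff.2 hf_mem
  have hle : T'.parsimony f ≤ 2 := by
    refine (parsimony_le_card {(a, b), (a', b')} fun x => ?_).trans Finset.card_le_two
    simp [f, side_eq_union hu hcv hdv hN, hc, hd]
  have hne : T'.parsimony f ≠ 2 := fun h2 => by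
    have : T.parsimony f = 2 := (h ▸ h2 : f ∈ T.Ak 2)
    omega
  have hpos : 0 < T'.parsimony f := parsimony_pos_of_mem_splits hf_mem
  exact hf ▸ mem_Ak_one_iff.1 (by omega : T'.parsimony f = 1)

end PhyloTree

theorem stmt_15_general {X : Type*} (k : ℕ) (hk : k = 1 ∨ k = 2)
    (T T' : PhyloTree X) :
    T.Isomorphic T' ↔ T.Ak k = T'.Ak k := by
  refine ⟨fun h => PhyloTree.Ak_eq_of_isomorphic h k,
    fun h => PhyloTree.isomorphic_of_splits_eq ?_⟩
  rcases hk with rfl | rfl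
  · exact PhyloTree.splits_eq_of_Ak_one_eq h
  · exact subset_antisymm (PhyloTree.splits_subset_of_Ak_two_eq h)
      (PhyloTree.splits_subset_of_Ak_two_eq h.symm)

/-- for `k ∈ {1,2}`, two binary phylogenetic `X`-trees are
isomorphic iff they have the same `A_k` alignment. -/
theorem stmt_15 {X : Type*} [Fintype X] (k : ℕ) (hk : k = 1 ∨ k = 2)
    (T T' : PhyloTree X) :
    T.Isomorphic T' ↔ T.Ak k = T'.Ak k :=
  stmt_15_general k hk T T'
end

section
/- Let k ≥ 2 and let T be a binary phylogenetic X-tree with |X| = n ≥ 2k + 3, and let T̃ be an NNI neighbor of T obtained by exchanging T_{A_2} with T_{B_2} as in the setup. Then s(T,T̃) ≥ k − 2; that is, for n ≥ 2k + 3 there are no NNI moves with s(T,T̃) < k − 2. -/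
open SimpleGraph

private lemma penult {V : Type*} {G : SimpleGraph V} {w u : V} (p : G.Walk w u)
    (hp : p.IsPath) (hwu : w ≠ u) :
    ∃ (c : V) (q : G.Walk w c), G.Adj u c ∧ q.IsPath ∧ u ∉ q.support ∧
      ∀ z ∈ q.support, z ∈ p.support := by
  obtain ⟨c, h, q', hq'⟩ := Walk.exists_eq_cons_of_ne hwu.symm p.reverse
  have hp' : (Walk.cons h q').IsPath := hq' ▸ hp.reverse
  rw [Walk.cons_isPath_iff] at hp'
  refine ⟨c, q'.reverse, h, hp'.1.reverse, by simpa using hp'.2, ?_⟩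
  intro z hz
  have h1 : z ∈ q'.support := by simpa using hz
  have h2 : z ∈ p.reverse.support := by
    rw [hq', Walk.support_cons]; exact List.mem_cons_of_mem _ h1
  simpa using h2

private lemma reach_of_avoid {V : Type*} {G : SimpleGraph V} {w c u d : V}
    (q : G.Walk w c) (hu : u ∉ q.support) :
    (G.deleteEdges {s(d, u)}).Reachable w c := by
  refine ⟨q.toDeleteEdges _ fun e he hes => ?_⟩
  rw [Set.mem_singleton_iff] at hes
  subst hes
  exact hu (q.snd_mem_support_of_mem_edges he)

/-- for `k ≥ 2` and `n ≥ 2k+3`, every NNI move (exchanging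
`T_{A₂}` with `T_{B₂}` across an inner edge `{u,v}`) satisfies
`s(T,T') = Σᵢ ⌊(nᵢ-1)/2⌋ ≥ k - 2`; i.e. there are no "problematic" NNI moves. -/
theorem stmt_18 {X : Type*} [Fintype X] (k : ℕ) (hk : 2 ≤ k)
    (hn : 2 * k + 3 ≤ Fintype.card X)
    (T T' : PhyloTree X) (u v a₁ a₂ b₁ b₂ : T.V)
    (huv : T.G.Adj u v)
    (ha₁ : T.G.Adj u a₁) (ha₂ : T.G.Adj u a₂)
    (hb₁ : T.G.Adj v b₁) (hb₂ : T.G.Adj v b₂)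
    (ha12 : a₁ ≠ a₂) (ha1v : a₁ ≠ v) (ha2v : a₂ ≠ v)
    (hb12 : b₁ ≠ b₂) (hb1u : b₁ ≠ u) (hb2u : b₂ ≠ u)
    (hT' : T'.splits = (T.splits \ {T.side u v, T.side v u}) ∪
      {T.side a₁ u ∪ T.side b₂ v, T.side a₂ u ∪ T.side b₁ v}) :
    k - 2 ≤ ((T.side a₁ u).ncard - 1) / 2 + ((T.side a₂ u).ncard - 1) / 2 +
      ((T.side b₁ v).ncard - 1) / 2 + ((T.side b₂ v).ncard - 1) / 2 := by
  haveI := T.fintypeV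
  classical
  -- the three neighbours of u
  have hsubu : ({v, a₁, a₂} : Set T.V) ⊆ T.G.neighborSet u := by
    intro z hz
    rcases hz with rfl | rfl | rfl
    · exact huv
    · exact ha₁
    · exact ha₂
  have hcard3u : ({v, a₁, a₂} : Set T.V).ncard = 3 := by
    rw [Set.ncard_insert_of_notMem (by simp [Ne.symm ha1v, Ne.symm ha2v]),
      Set.ncard_pair ha12]
  have hdegu : (T.G.neighborSet u).ncard = 3 := by
    rcases T.binary u with h | h
    · exfalso
      have := Set.ncard_le_ncard hsubu (Set.toFinite _)
      omega
    · exact h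
  have hnequ : T.G.neighborSet u = {v, a₁, a₂} :=
    (Set.eq_of_subset_of_ncard_le hsubu (by omega) (Set.toFinite _)).symm
  -- the three neighbours of v
  have hsubv : ({u, b₁, b₂} : Set T.V) ⊆ T.G.neighborSet v := by
    intro z hz
    rcases hz with rfl | rfl | rfl
    · exact huv.symm
    · exact hb₁
    · exact hb₂
  have hcard3v : ({u, b₁, b₂} : Set T.V).ncard = 3 := by
    rw [Set.ncard_insert_of_notMem (by simp [Ne.symm hb1u, Ne.symm hb2u]),
      Set.ncard_pair hb12]
  have hdegv : (T.G.neighborSet v).ncard = 3 := by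
    rcases T.binary v with h | h
    · exfalso
      have := Set.ncard_le_ncard hsubv (Set.toFinite _)
      omega
    · exact h
  have hneqv : T.G.neighborSet v = {u, b₁, b₂} :=
    (Set.eq_of_subset_of_ncard_le hsubv (by omega) (Set.toFinite _)).symm
  -- leaves are neither u nor v
  have hleaf_ne_u : ∀ x : X, T.leaf x ≠ u := by
    intro x h
    have h1 : (T.G.neighborSet u).ncard ≤ 1 := (T.leaf_iff u).mpr ⟨x, h⟩
    omega
  have hleaf_ne_v : ∀ x : X, T.leaf x ≠ v := by
    intro x h
    have h1 : (T.G.neighborSet v).ncard ≤ 1 := (T.leaf_iff v).mpr ⟨x, h⟩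
    omega
  -- every taxon lies on one of the four sides
  have cover : ∀ x : X, x ∈ (T.side a₁ u ∪ T.side a₂ u) ∪ (T.side b₁ v ∪ T.side b₂ v) := by
    intro x
    obtain ⟨p0⟩ := T.isTree.isConnected.preconnected (T.leaf x) u
    obtain ⟨c, q, hadj, hq, hunot, _⟩ := penult p0.bypass p0.bypass_isPath (hleaf_ne_u x)
    have hc : c ∈ ({v, a₁, a₂} : Set T.V) := by rw [← hnequ]; exact hadj
    rcases hc with rfl | rfl | rfl
    · -- the path reaches u through v : decompose further at v
      obtain ⟨c₂, r, hadj₂, _, hvnot, hsub₂⟩ := penult q hq (hleaf_ne_v x)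
      have hc₂ : c₂ ∈ ({u, b₁, b₂} : Set T.V) := by rw [← hneqv]; exact hadj₂
      have hc₂u : c₂ ≠ u := fun h => hunot (h ▸ hsub₂ c₂ r.end_mem_support)
      rcases hc₂ with rfl | rfl | rfl
      · exact absurd rfl hc₂u
      · exact Or.inr (Or.inl (reach_of_avoid r hvnot))
      · exact Or.inr (Or.inr (reach_of_avoid r hvnot))
    · exact Or.inl (Or.inl (reach_of_avoid q hunot))
    · exact Or.inl (Or.inr (reach_of_avoid q hunot))
  -- counting
  have hcard : Fintype.card X ≤ (T.side a₁ u).ncard + (T.side a₂ u).ncard +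
      ((T.side b₁ v).ncard + (T.side b₂ v).ncard) := by
    calc Fintype.card X = (Set.univ : Set X).ncard := by
            rw [Set.ncard_univ, Nat.card_eq_fintype_card]
      _ ≤ ((T.side a₁ u ∪ T.side a₂ u) ∪ (T.side b₁ v ∪ T.side b₂ v)).ncard :=
            Set.ncard_le_ncard (fun x _ => cover x) (Set.toFinite _)
      _ ≤ (T.side a₁ u ∪ T.side a₂ u).ncard + (T.side b₁ v ∪ T.side b₂ v).ncard :=
            Set.ncard_union_le _ _
      _ ≤ _ := add_le_add (Set.ncard_union_le _ _) (Set.ncard_union_le _ _)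
  omega
end
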